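/- arXiv:1212.0609 — 8 statements merged into one kernel-verified Lean document; each statement's English description precedes it below -/
import Mathlib

section
/- With a valid setup (s_1,A_{s_1}),…,(s_N,A_{s_N}) for S and the recursively defined functions P_i as in the context, assume that for every 2 ≤ i ≤ N and every configuration one has Q_i(x_{A_{s_i}}) > 0 and C_i(x_{s_i}, x_{A_{s_i}}) ∈ [0,1]. Then Π := P_N is a probability mass function on X_{s_1}×⋯×X_{s_N}; for every 1 ≤ i ≤ N the single-coordinate marginal of Π at s_i equals π_{s_i}; and for every 2 ≤ i ≤ N and every t ∈ A_{s_i}, the covariance under Π of the coordinates at s_i and at t equals β_{s_i,t}, i.e. ∑_x x_{s_i} x_t Π(x) − (∑_{y∈X_{s_i}} y π_{s_i}(y))·(∑_{y∈X_t} y π_t(y)) = β_{s_i,t}. -/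
open Finset

/-- The neighborhood of a finset of sites: `∂(A) = (⋃ s ∈ A, ∂(s)) \ A`, with the
convention `∂(∅) = S` (all sites). -/
def nbhd {V : Type*} [Fintype V] [DecidableEq V] (G : SimpleGraph V) [DecidableRel G.Adj]
    (A : Finset V) : Finset V :=
  if A = ∅ then Finset.univ else (A.biUnion fun v => G.neighborFinset v) \ A

/-- A finset `B` is connected if every nonempty proper subset of `B` has a
neighbor inside `B`. -/
def IsConn {V : Type*} [Fintype V] [DecidableEq V] (G : SimpleGraph V) [DecidableRel G.Adj]
    (B : Finset V) : Prop :=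
  ∀ A : Finset V, A.Nonempty → A ⊂ B → (nbhd G A ∩ B).Nonempty

/-- `B` is a connected component of `D`: it is a nonempty connected subset of `D`
having no neighbors in the rest of `D`. -/
def IsComponent {V : Type*} [Fintype V] [DecidableEq V] (G : SimpleGraph V) [DecidableRel G.Adj]
    (B D : Finset V) : Prop :=
  B ⊆ D ∧ B.Nonempty ∧ IsConn G B ∧ nbhd G B ∩ (D \ B) = ∅

/-- `μ̃_v`, the mean of the pmf `pt v` on `X v`. -/
noncomputable def muV {V : Type*} (X : V → Finset ℝ) (pt : V → ℝ → ℝ) (v : V) : ℝ :=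
  ∑ x ∈ X v, pt v x * x

/-- `σ̃²_v`, the variance of the pmf `pt v` on `X v`. -/
noncomputable def sig2V {V : Type*} (X : V → Finset ℝ) (pt : V → ℝ → ℝ) (v : V) : ℝ :=
  ∑ x ∈ X v, pt v x * (x - muV X pt v) ^ 2

/-- `ζ_v(x) = π̃_v(x)(x − μ̃_v)/σ̃²_v`. -/
noncomputable def zetaV {V : Type*} (X : V → Finset ℝ) (pt : V → ℝ → ℝ) (v : V) (x : ℝ) : ℝ :=
  pt v x * (x - muV X pt v) / sig2V X pt v

/-- The recursively defined functions `P_i` of the KNW construction: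
`P_0 = 1` and `P_{i+1}(x) = P_i(x) · C_{i+1}(x_{s_{i+1}}, x_{A_{s_{i+1}}})`. -/
noncomputable def Pfun {V : Type*} [Fintype V] [DecidableEq V] (X : V → Finset ℝ)
    (π πh pt : V → ℝ → ℝ) (β : V → V → ℝ) (s : ℕ → V) (A : ℕ → Finset V) :
    ℕ → (V → ℝ) → ℝ
  | 0, _ => 1
  | (i + 1), x =>
      Pfun X π πh pt β s A i x *
        (π (s (i + 1)) (x (s (i + 1))) +
          zetaV X pt (s (i + 1)) (x (s (i + 1))) *
            ∑ t ∈ A (i + 1),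
              (∏ u ∈ (A (i + 1)).erase t, πh u (x u)) * β (s (i + 1)) t * zetaV X pt t (x t) /
                ∑ y ∈ Fintype.piFinset
                    (fun v => if v ∈ ((Finset.Icc 1 i).image s) \ A (i + 1) then X v else {x v}),
                  Pfun X π πh pt β s A i y)

/-- `Q_i(x_{A_{s_i}})`: the marginal of `P_{i−1}` obtained by summing out the
coordinates indexed by `{s_1,…,s_{i−1}} \ A_{s_i}`. -/
noncomputable def Qfun {V : Type*} [Fintype V] [DecidableEq V] (X : V → Finset ℝ)
    (π πh pt : V → ℝ → ℝ) (β : V → V → ℝ) (s : ℕ → V) (A : ℕ → Finset V)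
    (i : ℕ) (x : V → ℝ) : ℝ :=
  ∑ y ∈ Fintype.piFinset
      (fun v => if v ∈ ((Finset.Icc 1 (i - 1)).image s) \ A i then X v else {x v}),
    Pfun X π πh pt β s A (i - 1) y

/-- `C_i(x_{s_i}, x_{A_{s_i}})`, the conditional probability of formula (2.5). -/
noncomputable def Cfun {V : Type*} [Fintype V] [DecidableEq V] (X : V → Finset ℝ)
    (π πh pt : V → ℝ → ℝ) (β : V → V → ℝ) (s : ℕ → V) (A : ℕ → Finset V)
    (i : ℕ) (x : V → ℝ) : ℝ :=
  π (s i) (x (s i)) +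
    zetaV X pt (s i) (x (s i)) *
      ∑ t ∈ A i,
        (∏ u ∈ (A i).erase t, πh u (x u)) * β (s i) t * zetaV X pt t (x t) /
          Qfun X π πh pt β s A i x


set_option linter.unusedSectionVars false
set_option maxHeartbeats 1600000

section Pin
variable {V : Type*} [Fintype V] [DecidableEq V]


/-- the family of finsets: coordinates in `B` range over `X v`, others pinned at `x v`. -/
def pin (X : V → Finset ℝ) (B : Finset V) (x : V → ℝ) : V → Finset ℝ :=
  fun v => if v ∈ B then X v else {x v}

lemma mem_pin {X : V → Finset ℝ} {B : Finset V} {x y : V → ℝ} :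
    y ∈ Fintype.piFinset (pin X B x) ↔ (∀ v ∈ B, y v ∈ X v) ∧ ∀ v ∉ B, y v = x v := by
  simp only [Fintype.mem_piFinset, pin]
  constructor
  · intro h
    refine ⟨fun v hv => by simpa [hv] using h v, fun v hv => by simpa [hv] using h v⟩
  · intro h v
    by_cases hv : v ∈ B <;> simp [hv, h.1 v, h.2 v]

lemma pin_subset {X : V → Finset ℝ} {B : Finset V} {x y : V → ℝ}
    (hx : x ∈ Fintype.piFinset X) (hy : y ∈ Fintype.piFinset (pin X B x)) :
    y ∈ Fintype.piFinset X := by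
  rw [mem_pin] at hy
  rw [Fintype.mem_piFinset] at hx ⊢
  intro v
  by_cases hv : v ∈ B
  · exact hy.1 v hv
  · rw [hy.2 v hv]; exact hx v

lemma sum_pin_empty {X : V → Finset ℝ} (x : V → ℝ) (f : (V → ℝ) → ℝ) :
    ∑ y ∈ Fintype.piFinset (pin X ∅ x), f y = f x := by
  have : Fintype.piFinset (pin X ∅ x) = {x} := by
    ext y
    simp only [Finset.mem_singleton, funext_iff, Fintype.mem_piFinset, pin, notMem_empty,
      if_false, Finset.mem_singleton, eq_comm]
  rw [this, Finset.sum_singleton]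

lemma sum_pin_insert {X : V → Finset ℝ} {a : V} {B : Finset V} (ha : a ∉ B)
    (x : V → ℝ) (f : (V → ℝ) → ℝ) :
    ∑ y ∈ Fintype.piFinset (pin X (insert a B) x), f y
      = ∑ c ∈ X a, ∑ y ∈ Fintype.piFinset (pin X B (Function.update x a c)), f y := by
  have hmaps : ∀ y ∈ Fintype.piFinset (pin X (insert a B) x), y a ∈ X a := by
    intro y hy
    exact (mem_pin.1 hy).1 a (mem_insert_self a B)
  rw [← Finset.sum_fiberwise_of_maps_to hmaps f]
  refine Finset.sum_congr rfl fun c hc => ?_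
  refine Finset.sum_congr ?_ (fun _ _ => rfl)
  ext y
  simp only [Finset.mem_filter, mem_pin]
  constructor
  · rintro ⟨⟨h1, h2⟩, h3⟩
    refine ⟨fun v hv => h1 v (mem_insert_of_mem hv), fun v hv => ?_⟩
    by_cases hva : v = a
    · subst hva; simp [h3]
    · rw [Function.update_of_ne hva]
      exact h2 v (by simp [hva, hv])
  · rintro ⟨h1, h2⟩
    have hya : y a = c := by simpa using h2 a ha
    refine ⟨⟨fun v hv => ?_, fun v hv => ?_⟩, hya⟩
    · rcases mem_insert.1 hv with rfl | hv
      · rw [hya]; exact hc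
      · exact h1 v hv
    · have hvB : v ∉ B := fun h => hv (mem_insert_of_mem h)
      have hva : v ≠ a := fun h => hv (h ▸ mem_insert_self a B)
      rw [h2 v hvB, Function.update_of_ne hva]

/-- base-independence: if `f` depends only on coordinates in `B ∪ C`, and the bases agree
on `C \ B`, the pinned sums agree. -/
lemma sum_pin_congr {X : V → Finset ℝ} {B C : Finset V} {x x' : V → ℝ} {f : (V → ℝ) → ℝ}
    (hf : ∀ y z : V → ℝ, (∀ v ∈ B ∪ C, y v = z v) → f y = f z)
    (hxx : ∀ v ∈ C, v ∉ B → x v = x' v) :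
    ∑ y ∈ Fintype.piFinset (pin X B x), f y = ∑ y ∈ Fintype.piFinset (pin X B x'), f y := by
  refine Finset.sum_nbij' (fun y => fun v => if v ∈ B then y v else x' v)
    (fun y => fun v => if v ∈ B then y v else x v) ?_ ?_ ?_ ?_ ?_
  · intro y hy
    rw [mem_pin] at hy ⊢
    exact ⟨fun v hv => by simp [hv, hy.1 v hv], fun v hv => by simp [hv]⟩
  · intro y hy
    rw [mem_pin] at hy ⊢
    exact ⟨fun v hv => by simp [hv, hy.1 v hv], fun v hv => by simp [hv]⟩
  · intro y hy
    rw [mem_pin] at hy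
    funext v
    by_cases hv : v ∈ B <;> simp [hv, (hy.2 v ·)]
  · intro y hy
    rw [mem_pin] at hy
    funext v
    by_cases hv : v ∈ B <;> simp [hv, (hy.2 v ·)]
  · intro y hy
    rw [mem_pin] at hy
    refine (hf _ _ fun v hv => ?_).symm
    rcases Finset.mem_union.1 hv with hv | hv
    · simp [hv]
    · by_cases hvB : v ∈ B
      · simp [hvB]
      · simp [hvB, hy.2 v hvB, hxx v hv hvB]

/-- splitting a pinned sum over a disjoint union into iterated pinned sums. -/
lemma sum_pin_union {X : V → Finset ℝ} {B₁ B₂ : Finset V} (h : Disjoint B₁ B₂)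
    (x : V → ℝ) (f : (V → ℝ) → ℝ) :
    ∑ y ∈ Fintype.piFinset (pin X (B₁ ∪ B₂) x), f y
      = ∑ z ∈ Fintype.piFinset (pin X B₁ x), ∑ y ∈ Fintype.piFinset (pin X B₂ z), f y := by
  induction B₁ using Finset.induction generalizing x with
  | empty => rw [Finset.empty_union, sum_pin_empty]
  | @insert a B₁ ha ih =>
    have hd : Disjoint B₁ B₂ := h.mono_left (Finset.subset_insert a B₁)
    have haB : a ∉ B₁ ∪ B₂ := by
      simp only [Finset.mem_union, not_or]
      exact ⟨ha, Finset.disjoint_left.1 h (mem_insert_self a B₁)⟩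
    rw [Finset.insert_union, sum_pin_insert haB, sum_pin_insert ha]
    exact Finset.sum_congr rfl fun c _ => ih hd _

/-- factorization of a pinned sum of a product over the pinned coordinates. -/
lemma sum_pin_prod {X : V → Finset ℝ} (B : Finset V) (x : V → ℝ) (h : V → ℝ → ℝ) :
    ∑ y ∈ Fintype.piFinset (pin X B x), ∏ u ∈ B, h u (y u)
      = ∏ u ∈ B, ∑ a ∈ X u, h u a := by
  induction B using Finset.induction generalizing x with
  | empty => simp [sum_pin_empty (X := X) x (fun _ => 1)]
  | @insert a B ha ih =>
    rw [sum_pin_insert ha]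
    rw [Finset.prod_insert ha]
    rw [Finset.sum_congr rfl fun c _ => ?_]
    · rw [← Finset.sum_mul]
    · rw [Finset.sum_congr rfl fun y hy => ?_, ← Finset.mul_sum, ih]
      rw [Finset.prod_insert ha, (mem_pin.1 hy).2 a ha, Function.update_self]

lemma zeta_sum_zero {X : V → Finset ℝ} {pt : V → ℝ → ℝ} {v : V}
    (hsum : ∑ x ∈ X v, pt v x = 1) :
    ∑ a ∈ X v, zetaV X pt v a = 0 := by
  unfold zetaV
  rw [← Finset.sum_div]
  have : ∑ a ∈ X v, pt v a * (a - muV X pt v) = 0 := by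
    simp only [mul_sub, Finset.sum_sub_distrib, ← Finset.sum_mul, hsum, one_mul]
    simp [muV]
  rw [this, zero_div]

lemma sig2_pos {X : V → Finset ℝ} {pt : V → ℝ → ℝ} {v : V}
    (hnn : ∀ x ∈ X v, 0 ≤ pt v x)
    (hnd : 1 < ((X v).filter fun x => pt v x ≠ 0).card) :
    0 < sig2V X pt v := by
  obtain ⟨a, ha, b, hb, hab⟩ := Finset.one_lt_card.1 hnd
  simp only [Finset.mem_filter] at ha hb
  have key : ∃ c ∈ X v, pt v c ≠ 0 ∧ c ≠ muV X pt v := by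
    by_cases hc : a = muV X pt v
    · exact ⟨b, hb.1, hb.2, fun h => hab (hc.trans h.symm ▸ rfl)⟩
    · exact ⟨a, ha.1, ha.2, hc⟩
  obtain ⟨c, hc, hc0, hcm⟩ := key
  refine Finset.sum_pos' (fun x hx => ?_) ⟨c, hc, ?_⟩
  · exact mul_nonneg (hnn x hx) (sq_nonneg _)
  · have h2 : (0:ℝ) < (c - muV X pt v) ^ 2 := by
      have := sub_ne_zero.2 hcm
      positivity
    exact mul_pos ((hnn c hc).lt_of_ne (Ne.symm hc0)) h2

lemma zeta_sum_id {X : V → Finset ℝ} {pt : V → ℝ → ℝ} {v : V}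
    (hnn : ∀ x ∈ X v, 0 ≤ pt v x)
    (hnd : 1 < ((X v).filter fun x => pt v x ≠ 0).card)
    (hsum : ∑ x ∈ X v, pt v x = 1) :
    ∑ a ∈ X v, zetaV X pt v a * a = 1 := by
  have hσ := sig2_pos hnn hnd
  unfold zetaV
  have : ∀ a, pt v a * (a - muV X pt v) / sig2V X pt v * a
      = pt v a * (a - muV X pt v) * a / sig2V X pt v := fun a => by ring
  simp only [this]
  rw [← Finset.sum_div, div_eq_one_iff_eq hσ.ne']
  have expand : ∀ a : ℝ, pt v a * (a - muV X pt v) * a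
      = pt v a * (a - muV X pt v) ^ 2 + muV X pt v * (pt v a * (a - muV X pt v)) := by
    intro a; ring
  simp only [expand, Finset.sum_add_distrib, ← Finset.mul_sum]
  have : ∑ a ∈ X v, pt v a * (a - muV X pt v) = 0 := by
    simp only [mul_sub, Finset.sum_sub_distrib, ← Finset.sum_mul, hsum, one_mul]
    simp [muV]
  rw [this, mul_zero, add_zero, sig2V]


variable (X : V → Finset ℝ) (π πh pt : V → ℝ → ℝ) (β : V → V → ℝ) (s : ℕ → V) (A : ℕ → Finset V)

/-- the `R` correction term appearing in `Cfun`. -/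
noncomputable def Rfun (i : ℕ) (x : V → ℝ) : ℝ :=
  ∑ t ∈ A i,
    (∏ u ∈ (A i).erase t, πh u (x u)) * β (s i) t * zetaV X pt t (x t) /
      Qfun X π πh pt β s A i x

lemma Cfun_eq (i : ℕ) (x : V → ℝ) :
    Cfun X π πh pt β s A i x
      = π (s i) (x (s i)) + zetaV X pt (s i) (x (s i)) * Rfun X π πh pt β s A i x := rfl

lemma Qfun_succ (i : ℕ) (x : V → ℝ) :
    Qfun X π πh pt β s A (i + 1) x
      = ∑ y ∈ Fintype.piFinset (pin X (((Finset.Icc 1 i).image s) \ A (i + 1)) x),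
          Pfun X π πh pt β s A i y := rfl

lemma Pfun_succ (i : ℕ) (x : V → ℝ) :
    Pfun X π πh pt β s A (i + 1) x
      = Pfun X π πh pt β s A i x *
          (π (s (i + 1)) (x (s (i + 1))) +
            zetaV X pt (s (i + 1)) (x (s (i + 1))) * Rfun X π πh pt β s A (i + 1) x) := rfl

lemma Pfun_zero (x : V → ℝ) : Pfun X π πh pt β s A 0 x = 1 := rfl



lemma Pfun_dep (N : ℕ) (hA1 : A 1 = ∅)
    (hA : ∀ j, 2 ≤ j → j ≤ N → A j ⊆ (Finset.Icc 1 (j-1)).image s) :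
    ∀ i, i ≤ N → ∀ y z : V → ℝ, (∀ v ∈ (Finset.Icc 1 i).image s, y v = z v) →
      Pfun X π πh pt β s A i y = Pfun X π πh pt β s A i z := by
  intro i
  induction i with
  | zero => intro _ y z _; rfl
  | succ i ih =>
    intro hiN y z hyz
    have hTsub : (Finset.Icc 1 i).image s ⊆ (Finset.Icc 1 (i+1)).image s :=
      Finset.image_subset_image (Finset.Icc_subset_Icc_right (Nat.le_succ i))
    have hyzT : ∀ v ∈ (Finset.Icc 1 i).image s, y v = z v := fun v hv => hyz v (hTsub hv)
    have hPi := ih (Nat.le_of_succ_le hiN) y z hyzT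
    have hs' : s (i+1) ∈ (Finset.Icc 1 (i+1)).image s :=
      Finset.mem_image_of_mem s (Finset.mem_Icc.2 ⟨by omega, le_refl _⟩)
    have hys' : y (s (i+1)) = z (s (i+1)) := hyz _ hs'
    rw [Pfun_succ, Pfun_succ, hPi, hys']
    rcases Nat.eq_zero_or_pos i with rfl | hipos
    · have hR : ∀ w : V → ℝ, Rfun X π πh pt β s A 1 w = 0 := by
        intro w; unfold Rfun; rw [hA1, Finset.sum_empty]
      rw [hR, hR]
    · have hAsub : A (i+1) ⊆ (Finset.Icc 1 i).image s := by
        simpa using hA (i+1) (by omega) hiN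
      have hQ : Qfun X π πh pt β s A (i+1) y = Qfun X π πh pt β s A (i+1) z := by
        rw [Qfun_succ, Qfun_succ]
        refine sum_pin_congr (C := (Finset.Icc 1 i).image s)
          (fun w w' hww' => ih (Nat.le_of_succ_le hiN) w w'
            (fun v hv => hww' v (Finset.mem_union_right _ hv))) ?_
        intro v hv hvB
        exact hyzT v hv
      have hRR : Rfun X π πh pt β s A (i+1) y = Rfun X π πh pt β s A (i+1) z := by
        unfold Rfun
        rw [hQ]
        refine Finset.sum_congr rfl fun t ht => ?_
        have hprod : (∏ u ∈ (A (i+1)).erase t, πh u (y u))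
            = ∏ u ∈ (A (i+1)).erase t, πh u (z u) :=
          Finset.prod_congr rfl fun u hu => by
            rw [hyzT u (hAsub (Finset.erase_subset _ _ hu))]
        rw [hyzT t (hAsub ht), hprod]
      rw [hRR]

lemma knw_main (N : ℕ)
    (hπpos : ∀ v, ∀ x ∈ X v, 0 < π v x) (hπsum : ∀ v, ∑ x ∈ X v, π v x = 1)
    (hπtnn : ∀ v, ∀ x ∈ X v, 0 ≤ pt v x) (hπtsum : ∀ v, ∑ x ∈ X v, pt v x = 1)
    (hπtnd : ∀ v, 1 < ((X v).filter fun x => pt v x ≠ 0).card)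
    (hπhsum : ∀ v, ∑ x ∈ X v, πh v x = 1)
    (hA1 : A 1 = ∅)
    (hAsub : ∀ j, 2 ≤ j → j ≤ N → A j ⊆ (Finset.Icc 1 (j-1)).image s)
    (hsnew : ∀ i, i + 1 ≤ N → s (i+1) ∉ (Finset.Icc 1 i).image s)
    (hQpos : ∀ i ∈ Finset.Icc 2 N, ∀ x ∈ Fintype.piFinset X,
      0 < Qfun X π πh pt β s A i x)
    (hC01 : ∀ i ∈ Finset.Icc 2 N, ∀ x ∈ Fintype.piFinset X,
      Cfun X π πh pt β s A i x ∈ Set.Icc (0:ℝ) 1) :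
    ∀ i, 1 ≤ i → i ≤ N →
      (∀ x ∈ Fintype.piFinset X, 0 ≤ Pfun X π πh pt β s A i x) ∧
      (∀ x ∈ Fintype.piFinset X, ∀ j ∈ Finset.Icc 1 i, ∀ f : ℝ → ℝ,
        ∑ y ∈ Fintype.piFinset (pin X ((Finset.Icc 1 i).image s) x),
          Pfun X π πh pt β s A i y * f (y (s j)) = ∑ a ∈ X (s j), π (s j) a * f a) ∧
      (∀ x ∈ Fintype.piFinset X, ∀ j ∈ Finset.Icc 2 i, ∀ t ∈ A j,
        ∑ y ∈ Fintype.piFinset (pin X ((Finset.Icc 1 i).image s) x),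
          Pfun X π πh pt β s A i y * (y (s j) * y t)
          = (∑ a ∈ X (s j), π (s j) a * a) * (∑ a ∈ X t, π t a * a) + β (s j) t) := by
  intro i hi1
  induction i, hi1 using Nat.le_induction with
  | base =>
    intro hN1
    have hP1 : ∀ y : V → ℝ, Pfun X π πh pt β s A 1 y = π (s 1) (y (s 1)) := by
      intro y
      have h := Pfun_succ X π πh pt β s A 0 y
      have hR : Rfun X π πh pt β s A 1 y = 0 := by
        unfold Rfun; rw [hA1]; exact Finset.sum_empty
      rw [show (0:ℕ)+1 = 1 from rfl] at h
      rw [h, hR, Pfun_zero, mul_zero, add_zero, one_mul]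
    have hT1 : (Finset.Icc 1 1).image s = {s 1} := by
      rw [Finset.Icc_self, Finset.image_singleton]
    refine ⟨fun x hx => by
        rw [hP1]; exact (hπpos (s 1) _ (Fintype.mem_piFinset.1 hx (s 1))).le, ?_, ?_⟩
    · intro x hx j hj f
      have hj1 : j = 1 := by have := Finset.mem_Icc.1 hj; omega
      subst hj1
      have hins : ({s 1} : Finset V) = insert (s 1) ∅ := rfl
      rw [hT1, hins, sum_pin_insert (Finset.notMem_empty (s 1)) x]
      rw [Finset.sum_congr rfl fun c hc => sum_pin_empty (X := X) _ _]
      refine Finset.sum_congr rfl fun c hc => ?_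
      rw [hP1, Function.update_self]
    · intro x hx j hj
      exact absurd (Finset.mem_Icc.1 hj) (by omega)
  | succ i hi1 ih =>
    intro hiN
    have hiN' : i ≤ N := Nat.le_of_succ_le hiN
    obtain ⟨ihpos, ihexp, ihcov⟩ := ih hiN'
    have hi2 : i + 1 ∈ Finset.Icc 2 N := Finset.mem_Icc.2 ⟨by omega, hiN⟩
    have hs' : s (i+1) ∉ (Finset.Icc 1 i).image s := hsnew i hiN
    have hA' : A (i+1) ⊆ (Finset.Icc 1 i).image s := by
      simpa using hAsub (i+1) (by omega) hiN
    have hTsucc : (Finset.Icc 1 (i+1)).image s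
        = insert (s (i+1)) ((Finset.Icc 1 i).image s) := by
      rw [← Finset.insert_Icc_right_eq_Icc_add_one (by omega : 1 ≤ i + 1), Finset.image_insert]
    have hdep : ∀ y z : V → ℝ, (∀ v ∈ (Finset.Icc 1 i).image s, y v = z v) →
        Pfun X π πh pt β s A i y = Pfun X π πh pt β s A i z :=
      Pfun_dep X π πh pt β s A N hA1 hAsub i hiN'
    have hQdep : ∀ y z : V → ℝ, (∀ v ∈ A (i+1), y v = z v) →
        Qfun X π πh pt β s A (i+1) y = Qfun X π πh pt β s A (i+1) z := by
      intro y z h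
      rw [Qfun_succ, Qfun_succ]
      refine sum_pin_congr (C := (Finset.Icc 1 i).image s)
        (fun w w' hww' => hdep w w' fun v hv => hww' v (Finset.mem_union_right _ hv)) ?_
      intro v hv hvB
      refine h v ?_
      by_contra hvA
      exact hvB (Finset.mem_sdiff.2 ⟨hv, hvA⟩)
    have hRdep : ∀ y z : V → ℝ, (∀ v ∈ (Finset.Icc 1 i).image s, y v = z v) →
        Rfun X π πh pt β s A (i+1) y = Rfun X π πh pt β s A (i+1) z := by
      intro y z h
      unfold Rfun
      rw [hQdep y z fun v hv => h v (hA' hv)]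
      refine Finset.sum_congr rfl fun t ht => ?_
      have hprod : (∏ u ∈ (A (i+1)).erase t, πh u (y u))
          = ∏ u ∈ (A (i+1)).erase t, πh u (z u) :=
        Finset.prod_congr rfl fun u hu => by rw [h u (hA' (Finset.erase_subset _ _ hu))]
      rw [hprod, h t (hA' ht)]
    have hQne : ∀ z ∈ Fintype.piFinset X, Qfun X π πh pt β s A (i+1) z ≠ 0 :=
      fun z hz => (hQpos (i+1) hi2 z hz).ne'
    have hK : ∀ x ∈ Fintype.piFinset X, ∀ H : (V → ℝ) → ℝ,
        (∀ y z : V → ℝ, (∀ v ∈ A (i+1), y v = z v) → H y = H z) →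
        ∑ y ∈ Fintype.piFinset (pin X ((Finset.Icc 1 i).image s) x),
            Pfun X π πh pt β s A i y * (H y / Qfun X π πh pt β s A (i+1) y)
          = ∑ z ∈ Fintype.piFinset (pin X (A (i+1)) x), H z := by
      intro x hx H hH
      have hsplit : (Finset.Icc 1 i).image s
          = A (i+1) ∪ ((Finset.Icc 1 i).image s \ A (i+1)) :=
        (Finset.union_sdiff_of_subset hA').symm
      rw [hsplit, sum_pin_union Finset.disjoint_sdiff x _]
      refine Finset.sum_congr rfl fun z hz => ?_
      have hzX : z ∈ Fintype.piFinset X := pin_subset hx hz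
      have heq : ∀ y ∈ Fintype.piFinset
          (pin X ((Finset.Icc 1 i).image s \ A (i+1)) z),
          Pfun X π πh pt β s A i y * (H y / Qfun X π πh pt β s A (i+1) y)
            = Pfun X π πh pt β s A i y * (H z / Qfun X π πh pt β s A (i+1) z) := by
        intro y hy
        have hag : ∀ v ∈ A (i+1), y v = z v := by
          intro v hv
          exact (mem_pin.1 hy).2 v (fun hc => (Finset.mem_sdiff.1 hc).2 hv)
        rw [hH y z hag, hQdep y z hag]
      rw [Finset.sum_congr rfl heq, ← Finset.sum_mul, ← Qfun_succ,
          mul_comm (Qfun X π πh pt β s A (i+1) z), div_mul_cancel₀ _ (hQne z hzX)]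
    -- evaluation of the pure `A (i+1)`-sums
    have hZ1 : ∀ x ∈ Fintype.piFinset X, ∀ t' ∈ A (i+1),
        ∑ z ∈ Fintype.piFinset (pin X (A (i+1)) x),
          (∏ u ∈ (A (i+1)).erase t', πh u (z u)) * β (s (i+1)) t'
            * zetaV X pt t' (z t') = 0 := by
      intro x hx t' ht'
      have hform : ∀ z : V → ℝ,
          (∏ u ∈ (A (i+1)).erase t', πh u (z u)) * β (s (i+1)) t'
              * zetaV X pt t' (z t')
            = β (s (i+1)) t' * ∏ u ∈ A (i+1),
                (if u = t' then zetaV X pt t' (z u) else πh u (z u)) := by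
        intro z
        rw [← Finset.mul_prod_erase (A (i+1))
            (fun u => if u = t' then zetaV X pt t' (z u) else πh u (z u)) ht']
        rw [if_pos rfl,
          Finset.prod_congr rfl fun u hu => if_neg (Finset.ne_of_mem_erase hu)]
        ring
      rw [Finset.sum_congr rfl fun z _ => hform z, ← Finset.mul_sum,
        sum_pin_prod (A (i+1)) x
          (fun u a => if u = t' then zetaV X pt t' a else πh u a),
        ← Finset.mul_prod_erase (A (i+1)) _ ht']
      have hfac : (∑ a ∈ X t', if t' = t' then zetaV X pt t' a else πh t' a) = 0 := by
        rw [Finset.sum_congr rfl fun a _ => if_pos rfl]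
        exact zeta_sum_zero (hπtsum t')
      rw [hfac, zero_mul, mul_zero]
    have hZ2 : ∀ x ∈ Fintype.piFinset X, ∀ t ∈ A (i+1), ∀ t' ∈ A (i+1),
        ∑ z ∈ Fintype.piFinset (pin X (A (i+1)) x),
          (∏ u ∈ (A (i+1)).erase t', πh u (z u)) * β (s (i+1)) t'
            * zetaV X pt t' (z t') * z t
          = if t' = t then β (s (i+1)) t else 0 := by
      intro x hx t ht t' ht'
      have hform : ∀ z : V → ℝ,
          (∏ u ∈ (A (i+1)).erase t', πh u (z u)) * β (s (i+1)) t'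
              * zetaV X pt t' (z t') * z t
            = β (s (i+1)) t' * ∏ u ∈ A (i+1),
                ((if u = t' then zetaV X pt t' (z u) else πh u (z u))
                  * (if u = t then z u else 1)) := by
        intro z
        rw [Finset.prod_mul_distrib, Finset.prod_ite_eq' (A (i+1)) t (fun u => z u),
          if_pos ht,
          ← Finset.mul_prod_erase (A (i+1))
            (fun u => if u = t' then zetaV X pt t' (z u) else πh u (z u)) ht',
          if_pos rfl,
          Finset.prod_congr rfl fun u hu => if_neg (Finset.ne_of_mem_erase hu)]
        ring
      rw [Finset.sum_congr rfl fun z _ => hform z, ← Finset.mul_sum,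
        sum_pin_prod (A (i+1)) x
          (fun u a => (if u = t' then zetaV X pt t' a else πh u a)
            * (if u = t then a else 1))]
      by_cases htt : t' = t
      · subst htt
        rw [if_pos rfl, ← Finset.mul_prod_erase (A (i+1)) _ ht']
        have hfac : (∑ a ∈ X t', (if t' = t' then zetaV X pt t' a else πh t' a)
            * (if t' = t' then a else 1)) = 1 := by
          rw [Finset.sum_congr rfl fun a _ => by rw [if_pos rfl, if_pos rfl]]
          exact zeta_sum_id (hπtnn t') (hπtnd t') (hπtsum t')
        have hrest : (∏ u ∈ (A (i+1)).erase t',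
            ∑ a ∈ X u, (if u = t' then zetaV X pt t' a else πh u a)
              * (if u = t' then a else 1)) = 1 := by
          rw [Finset.prod_congr rfl fun u hu => ?_]
          · exact Finset.prod_const_one
          · have hut : u ≠ t' := Finset.ne_of_mem_erase hu
            rw [Finset.sum_congr rfl fun a _ => by rw [if_neg hut, if_neg hut, mul_one]]
            exact hπhsum u
        rw [hfac, hrest, one_mul, mul_one]
      · rw [if_neg htt, ← Finset.mul_prod_erase (A (i+1)) _ ht']
        have hfac : (∑ a ∈ X t', (if t' = t' then zetaV X pt t' a else πh t' a)
            * (if t' = t then a else 1)) = 0 := by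
          rw [Finset.sum_congr rfl fun a _ => by rw [if_pos rfl, if_neg htt, mul_one]]
          exact zeta_sum_zero (hπtsum t')
        rw [hfac, zero_mul, mul_zero]
    have hRgen : ∀ x ∈ Fintype.piFinset X, ∀ w : (V → ℝ) → ℝ,
        (∀ y z : V → ℝ, (∀ v ∈ A (i+1), y v = z v) → w y = w z) →
        ∑ y ∈ Fintype.piFinset (pin X ((Finset.Icc 1 i).image s) x),
            Pfun X π πh pt β s A i y * (Rfun X π πh pt β s A (i+1) y * w y)
          = ∑ t' ∈ A (i+1), ∑ z ∈ Fintype.piFinset (pin X (A (i+1)) x),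
              (∏ u ∈ (A (i+1)).erase t', πh u (z u)) * β (s (i+1)) t'
                * zetaV X pt t' (z t') * w z := by
      intro x hx w hw
      have hstep : ∀ y : V → ℝ,
          Pfun X π πh pt β s A i y * (Rfun X π πh pt β s A (i+1) y * w y)
            = ∑ t' ∈ A (i+1), Pfun X π πh pt β s A i y *
                (((∏ u ∈ (A (i+1)).erase t', πh u (y u)) * β (s (i+1)) t'
                    * zetaV X pt t' (y t') * w y)
                  / Qfun X π πh pt β s A (i+1) y) := by
        intro y
        unfold Rfun
        rw [Finset.sum_mul, Finset.mul_sum]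
        refine Finset.sum_congr rfl fun t' ht' => ?_
        rw [div_mul_eq_mul_div]
      rw [Finset.sum_congr rfl fun y _ => hstep y, Finset.sum_comm]
      refine Finset.sum_congr rfl fun t' ht' => ?_
      refine hK x hx _ (fun y z h => ?_)
      have hprod : (∏ u ∈ (A (i+1)).erase t', πh u (y u))
          = ∏ u ∈ (A (i+1)).erase t', πh u (z u) :=
        Finset.prod_congr rfl fun u hu => by rw [h u (Finset.erase_subset _ _ hu)]
      rw [hw y z h, h t' ht', hprod]
    have hRzero : ∀ x ∈ Fintype.piFinset X,
        ∑ y ∈ Fintype.piFinset (pin X ((Finset.Icc 1 i).image s) x),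
          Pfun X π πh pt β s A i y * Rfun X π πh pt β s A (i+1) y = 0 := by
      intro x hx
      have h := hRgen x hx (fun _ => 1) (fun _ _ _ => rfl)
      simp only [mul_one] at h
      rw [h]
      exact Finset.sum_eq_zero fun t' ht' => hZ1 x hx t' ht'
    have hRcov : ∀ x ∈ Fintype.piFinset X, ∀ t ∈ A (i+1),
        ∑ y ∈ Fintype.piFinset (pin X ((Finset.Icc 1 i).image s) x),
          Pfun X π πh pt β s A i y * (Rfun X π πh pt β s A (i+1) y * y t)
          = β (s (i+1)) t := by
      intro x hx t ht
      rw [hRgen x hx (fun y => y t) (fun y z h => h t ht),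
        Finset.sum_congr rfl fun t' ht' => hZ2 x hx t ht t' ht',
        Finset.sum_ite_eq' (A (i+1)) t (fun _ => β (s (i+1)) t), if_pos ht]
    have hupdmem : ∀ x ∈ Fintype.piFinset X, ∀ c ∈ X (s (i+1)),
        Function.update x (s (i+1)) c ∈ Fintype.piFinset X := by
      intro x hx c hc
      rw [Fintype.mem_piFinset] at hx ⊢
      intro v
      by_cases hv : v = s (i+1)
      · subst hv; rw [Function.update_self]; exact hc
      · rw [Function.update_of_ne hv]; exact hx v
    have hPsum1 : ∀ z ∈ Fintype.piFinset X,
        ∑ y ∈ Fintype.piFinset (pin X ((Finset.Icc 1 i).image s) z),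
          Pfun X π πh pt β s A i y = 1 := by
      intro z hz
      have h := ihexp z hz 1 (Finset.mem_Icc.2 ⟨le_refl 1, hi1⟩) (fun _ => 1)
      simp only [mul_one] at h
      rw [h]
      exact hπsum (s 1)
    have hbase : ∀ F : (V → ℝ) → ℝ,
        (∀ y z : V → ℝ, (∀ v ∈ (Finset.Icc 1 i).image s, y v = z v) → F y = F z) →
        ∀ (x : V → ℝ) (c : ℝ),
        ∑ y ∈ Fintype.piFinset
            (pin X ((Finset.Icc 1 i).image s) (Function.update x (s (i+1)) c)), F y
          = ∑ y ∈ Fintype.piFinset (pin X ((Finset.Icc 1 i).image s) x), F y := by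
      intro F hF x c
      refine sum_pin_congr (C := ∅)
        (fun y z h => hF y z fun v hv => h v (Finset.mem_union_left _ hv)) ?_
      intro v hv
      exact absurd hv (Finset.notMem_empty v)
    refine ⟨?_, ?_, ?_⟩
    · intro x hx
      rw [Pfun_succ, ← Cfun_eq]
      exact mul_nonneg (ihpos x hx) (hC01 (i+1) hi2 x hx).1
    · intro x hx j hj f
      rw [hTsucc, sum_pin_insert hs' x]
      obtain ⟨hj1, hj2⟩ := Finset.mem_Icc.1 hj
      by_cases hjle : j ≤ i
      · have hjIcc : j ∈ Finset.Icc 1 i := Finset.mem_Icc.2 ⟨hj1, hjle⟩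
        have hsj : s j ∈ (Finset.Icc 1 i).image s := Finset.mem_image_of_mem s hjIcc
        have hFdep : ∀ y z : V → ℝ,
            (∀ v ∈ (Finset.Icc 1 i).image s, y v = z v) →
            Pfun X π πh pt β s A i y * (Rfun X π πh pt β s A (i+1) y * f (y (s j)))
              = Pfun X π πh pt β s A i z
                  * (Rfun X π πh pt β s A (i+1) z * f (z (s j))) := by
          intro y z h
          rw [hdep y z h, hRdep y z h, h (s j) hsj]
        have hinner : ∀ c ∈ X (s (i+1)),
            ∑ y ∈ Fintype.piFinset
                (pin X ((Finset.Icc 1 i).image s) (Function.update x (s (i+1)) c)),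
              Pfun X π πh pt β s A (i+1) y * f (y (s j))
            = π (s (i+1)) c * (∑ a ∈ X (s j), π (s j) a * f a)
              + zetaV X pt (s (i+1)) c *
                (∑ y ∈ Fintype.piFinset (pin X ((Finset.Icc 1 i).image s) x),
                  Pfun X π πh pt β s A i y
                    * (Rfun X π πh pt β s A (i+1) y * f (y (s j)))) := by
          intro c hc
          have hyform : ∀ y ∈ Fintype.piFinset
              (pin X ((Finset.Icc 1 i).image s) (Function.update x (s (i+1)) c)),
              Pfun X π πh pt β s A (i+1) y * f (y (s j))
                = π (s (i+1)) c * (Pfun X π πh pt β s A i y * f (y (s j)))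
                  + zetaV X pt (s (i+1)) c *
                    (Pfun X π πh pt β s A i y
                      * (Rfun X π πh pt β s A (i+1) y * f (y (s j)))) := by
            intro y hy
            have hysc : y (s (i+1)) = c := by
              rw [(mem_pin.1 hy).2 _ hs', Function.update_self]
            rw [Pfun_succ, hysc]; ring
          rw [Finset.sum_congr rfl hyform, Finset.sum_add_distrib,
            ← Finset.mul_sum, ← Finset.mul_sum,
            ihexp _ (hupdmem x hx c hc) j hjIcc f,
            hbase _ hFdep x c]
        rw [Finset.sum_congr rfl hinner, Finset.sum_add_distrib,
          ← Finset.sum_mul, ← Finset.sum_mul, hπsum (s (i+1)),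
          zeta_sum_zero (hπtsum (s (i+1))), one_mul, zero_mul, add_zero]
      · have hji : j = i + 1 := by omega
        subst hji
        have hinner : ∀ c ∈ X (s (i+1)),
            ∑ y ∈ Fintype.piFinset
                (pin X ((Finset.Icc 1 i).image s)
                  (Function.update x (s (i+1)) c)),
              Pfun X π πh pt β s A (i+1) y * f (y (s (i+1)))
            = π (s (i+1)) c * f c := by
          intro c hc
          have hyform : ∀ y ∈ Fintype.piFinset
              (pin X ((Finset.Icc 1 i).image s) (Function.update x (s (i+1)) c)),
              Pfun X π πh pt β s A (i+1) y * f (y (s (i+1)))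
                = (π (s (i+1)) c * f c) * Pfun X π πh pt β s A i y
                  + (zetaV X pt (s (i+1)) c * f c) *
                    (Pfun X π πh pt β s A i y * Rfun X π πh pt β s A (i+1) y) := by
            intro y hy
            have hysc : y (s (i+1)) = c := by
              rw [(mem_pin.1 hy).2 _ hs', Function.update_self]
            rw [Pfun_succ, hysc]; ring
          rw [Finset.sum_congr rfl hyform, Finset.sum_add_distrib,
            ← Finset.mul_sum, ← Finset.mul_sum,
            hPsum1 _ (hupdmem x hx c hc),
            hRzero _ (hupdmem x hx c hc), mul_zero, add_zero, mul_one]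
        rw [Finset.sum_congr rfl hinner]
    · intro x hx j hj t ht
      rw [hTsucc, sum_pin_insert hs' x]
      obtain ⟨hj1, hj2⟩ := Finset.mem_Icc.1 hj
      by_cases hjle : j ≤ i
      · have hjIcc : j ∈ Finset.Icc 2 i := Finset.mem_Icc.2 ⟨hj1, hjle⟩
        have hsj : s j ∈ (Finset.Icc 1 i).image s :=
          Finset.mem_image_of_mem s (Finset.mem_Icc.2 ⟨by omega, hjle⟩)
        have htT : t ∈ (Finset.Icc 1 i).image s := by
          have h1 : A j ⊆ (Finset.Icc 1 (j-1)).image s := hAsub j hj1 (by omega)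
          have h2 : (Finset.Icc 1 (j-1)).image s ⊆ (Finset.Icc 1 i).image s :=
            Finset.image_subset_image (Finset.Icc_subset_Icc_right (by omega))
          exact h2 (h1 ht)
        have hFdep : ∀ y z : V → ℝ,
            (∀ v ∈ (Finset.Icc 1 i).image s, y v = z v) →
            Pfun X π πh pt β s A i y
                * (Rfun X π πh pt β s A (i+1) y * (y (s j) * y t))
              = Pfun X π πh pt β s A i z
                  * (Rfun X π πh pt β s A (i+1) z * (z (s j) * z t)) := by
          intro y z h
          rw [hdep y z h, hRdep y z h, h (s j) hsj, h t htT]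
        have hinner : ∀ c ∈ X (s (i+1)),
            ∑ y ∈ Fintype.piFinset
                (pin X ((Finset.Icc 1 i).image s) (Function.update x (s (i+1)) c)),
              Pfun X π πh pt β s A (i+1) y * (y (s j) * y t)
            = π (s (i+1)) c *
                ((∑ a ∈ X (s j), π (s j) a * a) * (∑ a ∈ X t, π t a * a) + β (s j) t)
              + zetaV X pt (s (i+1)) c *
                (∑ y ∈ Fintype.piFinset (pin X ((Finset.Icc 1 i).image s) x),
                  Pfun X π πh pt β s A i y
                    * (Rfun X π πh pt β s A (i+1) y * (y (s j) * y t))) := by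
          intro c hc
          have hyform : ∀ y ∈ Fintype.piFinset
              (pin X ((Finset.Icc 1 i).image s) (Function.update x (s (i+1)) c)),
              Pfun X π πh pt β s A (i+1) y * (y (s j) * y t)
                = π (s (i+1)) c * (Pfun X π πh pt β s A i y * (y (s j) * y t))
                  + zetaV X pt (s (i+1)) c *
                    (Pfun X π πh pt β s A i y
                      * (Rfun X π πh pt β s A (i+1) y * (y (s j) * y t))) := by
            intro y hy
            have hysc : y (s (i+1)) = c := by
              rw [(mem_pin.1 hy).2 _ hs', Function.update_self]
            rw [Pfun_succ, hysc]; ring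
          rw [Finset.sum_congr rfl hyform, Finset.sum_add_distrib,
            ← Finset.mul_sum, ← Finset.mul_sum,
            ihcov _ (hupdmem x hx c hc) j hjIcc t ht,
            hbase _ hFdep x c]
        rw [Finset.sum_congr rfl hinner, Finset.sum_add_distrib,
          ← Finset.sum_mul, ← Finset.sum_mul, hπsum (s (i+1)),
          zeta_sum_zero (hπtsum (s (i+1))), one_mul, zero_mul, add_zero]
      · have hji : j = i + 1 := by omega
        subst hji
        have htA : t ∈ A (i+1) := ht
        have hEt : ∀ z ∈ Fintype.piFinset X,
            ∑ y ∈ Fintype.piFinset (pin X ((Finset.Icc 1 i).image s) z),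
              Pfun X π πh pt β s A i y * y t = ∑ a ∈ X t, π t a * a := by
          intro z hz
          obtain ⟨k, hkIcc, hk⟩ := Finset.mem_image.1 (hA' htA)
          have h := ihexp z hz k hkIcc (fun r => r)
          simp only [hk] at h
          exact h
        have hinner : ∀ c ∈ X (s (i+1)),
            ∑ y ∈ Fintype.piFinset
                (pin X ((Finset.Icc 1 i).image s) (Function.update x (s (i+1)) c)),
              Pfun X π πh pt β s A (i+1) y * (y (s (i+1)) * y t)
            = (π (s (i+1)) c * c) * (∑ a ∈ X t, π t a * a)
              + (zetaV X pt (s (i+1)) c * c) * β (s (i+1)) t := by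
          intro c hc
          have hyform : ∀ y ∈ Fintype.piFinset
              (pin X ((Finset.Icc 1 i).image s) (Function.update x (s (i+1)) c)),
              Pfun X π πh pt β s A (i+1) y * (y (s (i+1)) * y t)
                = (π (s (i+1)) c * c) * (Pfun X π πh pt β s A i y * y t)
                  + (zetaV X pt (s (i+1)) c * c) *
                    (Pfun X π πh pt β s A i y
                      * (Rfun X π πh pt β s A (i+1) y * y t)) := by
            intro y hy
            have hysc : y (s (i+1)) = c := by
              rw [(mem_pin.1 hy).2 _ hs', Function.update_self]
            rw [Pfun_succ, hysc]; ring
          rw [Finset.sum_congr rfl hyform, Finset.sum_add_distrib,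
            ← Finset.mul_sum, ← Finset.mul_sum,
            hEt _ (hupdmem x hx c hc),
            hRcov _ (hupdmem x hx c hc) t htA]
        rw [Finset.sum_congr rfl hinner, Finset.sum_add_distrib,
          ← Finset.sum_mul, ← Finset.sum_mul,
          zeta_sum_id (hπtnn (s (i+1))) (hπtnd (s (i+1))) (hπtsum (s (i+1))), one_mul]

end Pin


theorem stmt2 {V : Type*} [Fintype V] [DecidableEq V] (G : SimpleGraph V) [DecidableRel G.Adj]
    (N : ℕ) (hcard : Fintype.card V = N) (hN : 2 < N)
    (hconn : IsConn G (Finset.univ : Finset V))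
    (X : V → Finset ℝ) (π πt πh : V → ℝ → ℝ) (β : V → V → ℝ)
    (hXne : ∀ v, (X v).Nonempty)
    (hπpos : ∀ v, ∀ x ∈ X v, 0 < π v x) (hπsum : ∀ v, ∑ x ∈ X v, π v x = 1)
    (hπtnn : ∀ v, ∀ x ∈ X v, 0 ≤ πt v x) (hπtsum : ∀ v, ∑ x ∈ X v, πt v x = 1)
    (hπtnd : ∀ v, 1 < ((X v).filter fun x => πt v x ≠ 0).card)
    (hπhnn : ∀ v, ∀ x ∈ X v, 0 ≤ πh v x) (hπhsum : ∀ v, ∑ x ∈ X v, πh v x = 1)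
    (hβsymm : ∀ v w, β v w = β w v)
    -- the valid setup `{(s_i, A_{s_i})}_{i=1}^N` for `S`
    (s : ℕ → V) (A : ℕ → Finset V)
    (hsinj : Set.InjOn s (Set.Icc 1 N))
    (hssurj : ∀ v, ∃ i ∈ Finset.Icc 1 N, s i = v)
    (hA1 : A 1 = ∅)
    (hnbr : ∀ i ∈ Finset.Icc 2 N, s i ∈ nbhd G ((Finset.Icc 1 (i - 1)).image s))
    (hcomp : ∀ i ∈ Finset.Icc 2 N,
      IsComponent G (A i) (G.neighborFinset (s i) ∩ (Finset.Icc 1 (i - 1)).image s))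
    -- regularity assumptions
    (hQpos : ∀ i ∈ Finset.Icc 2 N, ∀ x ∈ Fintype.piFinset X,
      0 < Qfun X π πh πt β s A i x)
    (hC01 : ∀ i ∈ Finset.Icc 2 N, ∀ x ∈ Fintype.piFinset X,
      Cfun X π πh πt β s A i x ∈ Set.Icc (0 : ℝ) 1) :
    -- `Π := P_N` is a probability mass function
    (∀ x ∈ Fintype.piFinset X, 0 ≤ Pfun X π πh πt β s A N x) ∧
    (∑ x ∈ Fintype.piFinset X, Pfun X π πh πt β s A N x = 1) ∧
    -- single-coordinate marginals
    (∀ i ∈ Finset.Icc 1 N, ∀ a ∈ X (s i),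
      ∑ x ∈ (Fintype.piFinset X).filter (fun z => z (s i) = a),
        Pfun X π πh πt β s A N x = π (s i) a) ∧
    -- covariances
    (∀ i ∈ Finset.Icc 2 N, ∀ t ∈ A i,
      ∑ x ∈ Fintype.piFinset X, x (s i) * x t * Pfun X π πh πt β s A N x -
        (∑ a ∈ X (s i), a * π (s i) a) * (∑ a ∈ X t, a * π t a) = β (s i) t) := by

  have hAsub : ∀ j, 2 ≤ j → j ≤ N → A j ⊆ (Finset.Icc 1 (j-1)).image s := by
    intro j h2 hN
    exact (hcomp j (Finset.mem_Icc.2 ⟨h2, hN⟩)).1.trans Finset.inter_subset_right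
  have hsnew : ∀ i, i + 1 ≤ N → s (i+1) ∉ (Finset.Icc 1 i).image s := by
    intro i hiN h
    obtain ⟨k, hk, hks⟩ := Finset.mem_image.1 h
    obtain ⟨hk1, hk2⟩ := Finset.mem_Icc.1 hk
    have : k = i + 1 :=
      hsinj ⟨by exact_mod_cast hk1, by exact_mod_cast hk2.trans (by omega)⟩
        ⟨by omega, hiN⟩ hks
    omega
  have main := knw_main X π πh πt β s A N hπpos hπsum hπtnn hπtsum hπtnd hπhsum
    hA1 hAsub hsnew hQpos hC01
  have hTN : (Finset.Icc 1 N).image s = Finset.univ := by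
    refine Finset.eq_univ_of_forall fun v => ?_
    obtain ⟨i, hi, hsi⟩ := hssurj v
    exact Finset.mem_image.2 ⟨i, hi, hsi⟩
  have hpinuniv : ∀ x : V → ℝ,
      Fintype.piFinset (pin X ((Finset.Icc 1 N).image s) x) = Fintype.piFinset X := by
    intro x
    rw [hTN]
    congr 1
    funext v
    simp [pin]
  obtain ⟨x₀, hx₀⟩ : (Fintype.piFinset X).Nonempty :=
    ⟨fun v => (hXne v).choose, Fintype.mem_piFinset.2 fun v => (hXne v).choose_spec⟩
  have hN1 : 1 ≤ N := by omega
  obtain ⟨hpos, hexp, hcov⟩ := main N hN1 le_rfl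
  refine ⟨hpos, ?_, ?_, ?_⟩
  · have h := hexp x₀ hx₀ 1 (Finset.mem_Icc.2 ⟨le_rfl, hN1⟩) (fun _ => 1)
    rw [hpinuniv x₀] at h
    simp only [mul_one] at h
    rw [h]
    exact hπsum (s 1)
  · intro i hi a ha
    have h := hexp x₀ hx₀ i hi (fun r => if r = a then (1:ℝ) else 0)
    rw [hpinuniv x₀] at h
    rw [Finset.sum_filter]
    have hl : ∀ y : V → ℝ, (if y (s i) = a then Pfun X π πh πt β s A N y else 0)
        = Pfun X π πh πt β s A N y * (if y (s i) = a then (1:ℝ) else 0) := by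
      intro y; by_cases hya : y (s i) = a <;> simp [hya]
    rw [Finset.sum_congr rfl fun y _ => hl y, h]
    have hr : ∀ b ∈ X (s i), π (s i) b * (if b = a then (1:ℝ) else 0)
        = if b = a then π (s i) b else 0 := by
      intro b _; by_cases hba : b = a <;> simp [hba]
    rw [Finset.sum_congr rfl hr, Finset.sum_ite_eq' (X (s i)) a (fun b => π (s i) b),
      if_pos ha]
  · intro i hi t ht
    have h := hcov x₀ hx₀ i hi t ht
    rw [hpinuniv x₀] at h
    have hl : ∀ y : V → ℝ, y (s i) * y t * Pfun X π πh πt β s A N y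
        = Pfun X π πh πt β s A N y * (y (s i) * y t) := fun y => by ring
    rw [Finset.sum_congr rfl fun y _ => hl y, h]
    have hc1 : ∑ a ∈ X (s i), a * π (s i) a = ∑ a ∈ X (s i), π (s i) a * a :=
      Finset.sum_congr rfl fun a _ => mul_comm _ _
    have hc2 : ∑ a ∈ X t, a * π t a = ∑ a ∈ X t, π t a * a :=
      Finset.sum_congr rfl fun a _ => mul_comm _ _
    rw [hc1, hc2]
    ring
end

section
/- Let A be a finite index set and s ∉ A, with data (X, π, π̃, π̂, μ̃, σ̃², ζ) as in the context for s and for each t ∈ A, and let β_{s,t} ∈ ℝ for t ∈ A. Let Q be any probability mass function on ∏_{t∈A} X_t, and define P on X_s × ∏_{t∈A} X_t by P(x_s, x_A) = π_s(x_s)·Q(x_A) + ζ_s(x_s) · ∑_{t∈A} (∏_{u∈A\{t}} π̂_u(x_u)) · β_{s,t} ζ_t(x_t). Then: (i) for every x_A, ∑_{x_s∈X_s} P(x_s, x_A) = Q(x_A); (ii) for every x_s, ∑_{x_A} P(x_s, x_A) = π_s(x_s). In particular, if P is nonnegative then P is a probability mass function whose marginal at s is π_s and whose marginal on A is Q. 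-/
/-!
Both marginal identities come from the fact that `ζ` has total mass zero. Summing over `x_s` kills
the correction term through `∑ ζ_s = 0`. Summing over `x_A`, the `t`-th correction term is a product
of one-variable functions over the box `∏ X_u`, so its sum factorises into `∏_u ∑_{X_u}`, and its
`t`-th factor `∑ ζ_t` vanishes.
-/

open Finset

/-- `μ̃`, the mean of the pmf `p` on the finite state space `X`. -/
noncomputable def muF (X : Finset ℝ) (p : ℝ → ℝ) : ℝ := ∑ x ∈ X, p x * x

/-- `σ̃²`, the variance of the pmf `p` on `X`. -/
noncomputable def sig2F (X : Finset ℝ) (p : ℝ → ℝ) : ℝ := ∑ x ∈ X, p x * (x - muF X p) ^ 2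

/-- `ζ(x) = π̃(x)(x − μ̃)/σ̃²`. -/
noncomputable def zetaF (X : Finset ℝ) (p : ℝ → ℝ) (x : ℝ) : ℝ :=
  p x * (x - muF X p) / sig2F X p

lemma sum_zetaF_eq_zero {X : Finset ℝ} {p : ℝ → ℝ} (h : ∑ x ∈ X, p x = 1) :
    ∑ x ∈ X, zetaF X p x = 0 := by
  have hcentered : ∑ x ∈ X, p x * (x - muF X p) = 0 := by
    simp only [mul_sub, sum_sub_distrib, ← sum_mul, h, one_mul, muF, sub_self]
  simp only [zetaF, div_eq_mul_inv, ← sum_mul, hcentered, zero_mul]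

lemma sum_piFinset_prod_erase_mul_eq_zero {ι α R : Type*} [Fintype ι] [DecidableEq ι]
    [DecidableEq α] [CommSemiring R] {X : ι → Finset α} (g : ι → α → R) {t : ι} {f : α → R}
    (hf : ∑ a ∈ X t, f a = 0) :
    ∑ x ∈ Fintype.piFinset X, (∏ u ∈ univ.erase t, g u (x u)) * f (x t) = 0 := by
  let g' : ι → α → R := Function.update g t f
  have hprod (x : ι → α) : (∏ u ∈ univ.erase t, g u (x u)) * f (x t) = ∏ u, g' u (x u) := by
    rw [← prod_erase_mul _ _ (mem_univ t)]
    congr 1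
    · exact prod_congr rfl fun u hu => by simp [g', ne_of_mem_erase hu]
    · simp [g']
  simp only [hprod, ← prod_univ_sum]
  exact prod_eq_zero (mem_univ t) (by simpa [g'] using hf)

theorem stmt3_general {ι : Type*} [Fintype ι] [DecidableEq ι]
    -- data at the extra site `s` (not a member of the index set `ι` of `A`)
    (Xs : Finset ℝ) (πs pts : ℝ → ℝ)
    -- data at the sites of `A`
    (X : ι → Finset ℝ) (pt ph : ι → ℝ → ℝ) (β : ι → ℝ)
    (hπs_sum : ∑ x ∈ Xs, πs x = 1)
    (hpts_sum : ∑ x ∈ Xs, pts x = 1)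
    (hpt_sum : ∀ t, ∑ x ∈ X t, pt t x = 1)
    -- `Q` is a pmf on `∏_{t ∈ A} X_t`
    (Q : (ι → ℝ) → ℝ)
    (hQ_sum : ∑ xA ∈ Fintype.piFinset X, Q xA = 1)
    -- the function `P`
    (P : ℝ → (ι → ℝ) → ℝ)
    (hP : ∀ xs xA, P xs xA = πs xs * Q xA +
      zetaF Xs pts xs *
        ∑ t, (∏ u ∈ Finset.univ.erase t, ph u (xA u)) * β t * zetaF (X t) (pt t) (xA t)) :
    -- (i) summing out the coordinate at `s` recovers `Q`
    (∀ xA ∈ Fintype.piFinset X, ∑ xs ∈ Xs, P xs xA = Q xA) ∧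
    -- (ii) summing out the coordinates of `A` recovers `π_s`
    (∀ xs ∈ Xs, ∑ xA ∈ Fintype.piFinset X, P xs xA = πs xs) ∧
    -- in particular, if `P` is nonnegative it is a probability mass function
    ((∀ xs ∈ Xs, ∀ xA ∈ Fintype.piFinset X, 0 ≤ P xs xA) →
      ∑ xs ∈ Xs, ∑ xA ∈ Fintype.piFinset X, P xs xA = 1) := by
  have correction_sum_eq_zero (t : ι) : ∑ xA ∈ Fintype.piFinset X,
      (∏ u ∈ univ.erase t, ph u (xA u)) * β t * zetaF (X t) (pt t) (xA t) = 0 := by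
    simp only [mul_assoc]
    exact sum_piFinset_prod_erase_mul_eq_zero ph (f := fun a => β t * zetaF (X t) (pt t) a)
      (by rw [← mul_sum, sum_zetaF_eq_zero (hpt_sum t), mul_zero])
  have marginal_A (xA : ι → ℝ) : ∑ xs ∈ Xs, P xs xA = Q xA := by
    simp only [hP, sum_add_distrib, ← sum_mul, hπs_sum, sum_zetaF_eq_zero hpts_sum, one_mul,
      zero_mul, add_zero]
  have marginal_s (xs : ℝ) : ∑ xA ∈ Fintype.piFinset X, P xs xA = πs xs := by
    simp only [hP, sum_add_distrib, ← mul_sum, hQ_sum, mul_one]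
    rw [sum_comm]
    simp only [correction_sum_eq_zero, sum_const_zero, mul_zero, add_zero]
  refine ⟨fun xA _ => marginal_A xA, fun xs _ => marginal_s xs, fun _ => ?_⟩
  rw [sum_congr rfl fun xs _ => marginal_s xs, hπs_sum]

theorem stmt3 {ι : Type*} [Fintype ι] [DecidableEq ι]
    -- data at the extra site `s` (not a member of the index set `ι` of `A`)
    (Xs : Finset ℝ) (πs pts phs : ℝ → ℝ)
    -- data at the sites of `A`
    (X : ι → Finset ℝ) (π pt ph : ι → ℝ → ℝ) (β : ι → ℝ)
    (hXsne : Xs.Nonempty)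
    (hπs_pos : ∀ x ∈ Xs, 0 < πs x) (hπs_sum : ∑ x ∈ Xs, πs x = 1)
    (hpts_nn : ∀ x ∈ Xs, 0 ≤ pts x) (hpts_sum : ∑ x ∈ Xs, pts x = 1)
    (hpts_nd : 1 < (Xs.filter fun x => pts x ≠ 0).card)
    (hphs_nn : ∀ x ∈ Xs, 0 ≤ phs x) (hphs_sum : ∑ x ∈ Xs, phs x = 1)
    (hXne : ∀ t, (X t).Nonempty)
    (hπ_pos : ∀ t, ∀ x ∈ X t, 0 < π t x) (hπ_sum : ∀ t, ∑ x ∈ X t, π t x = 1)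
    (hpt_nn : ∀ t, ∀ x ∈ X t, 0 ≤ pt t x) (hpt_sum : ∀ t, ∑ x ∈ X t, pt t x = 1)
    (hpt_nd : ∀ t, 1 < ((X t).filter fun x => pt t x ≠ 0).card)
    (hph_nn : ∀ t, ∀ x ∈ X t, 0 ≤ ph t x) (hph_sum : ∀ t, ∑ x ∈ X t, ph t x = 1)
    -- `Q` is a pmf on `∏_{t ∈ A} X_t`
    (Q : (ι → ℝ) → ℝ)
    (hQ_nn : ∀ xA ∈ Fintype.piFinset X, 0 ≤ Q xA)
    (hQ_sum : ∑ xA ∈ Fintype.piFinset X, Q xA = 1)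
    -- the function `P`
    (P : ℝ → (ι → ℝ) → ℝ)
    (hP : ∀ xs xA, P xs xA = πs xs * Q xA +
      zetaF Xs pts xs *
        ∑ t, (∏ u ∈ Finset.univ.erase t, ph u (xA u)) * β t * zetaF (X t) (pt t) (xA t)) :
    -- (i) summing out the coordinate at `s` recovers `Q`
    (∀ xA ∈ Fintype.piFinset X, ∑ xs ∈ Xs, P xs xA = Q xA) ∧
    -- (ii) summing out the coordinates of `A` recovers `π_s`
    (∀ xs ∈ Xs, ∑ xA ∈ Fintype.piFinset X, P xs xA = πs xs) ∧
    -- in particular, if `P` is nonnegative it is a probability mass function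
    ((∀ xs ∈ Xs, ∀ xA ∈ Fintype.piFinset X, 0 ≤ P xs xA) →
      ∑ xs ∈ Xs, ∑ xA ∈ Fintype.piFinset X, P xs xA = 1) :=
  stmt3_general Xs πs pts X pt ph β hπs_sum hpts_sum hpt_sum Q hQ_sum P hP
end

section
/- Let s and t be two indices with data as in the context, and let β ∈ ℝ. For x_s ∈ X_s with ζ_s(x_s) ≠ 0 and x_t ∈ X_t with ζ_t(x_t) ≠ 0, set L(x_s,x_t) = −π_s(x_s)π_t(x_t)/(ζ_s(x_s)ζ_t(x_t)) and U(x_s,x_t) = (1−π_s(x_s))π_t(x_t)/(ζ_s(x_s)ζ_t(x_t)). Then the following are equivalent: (i) for all x_s ∈ X_s and x_t ∈ X_t, π_s(x_s) + ζ_s(x_s)·β·ζ_t(x_t)/π_t(x_t) ∈ [0,1]; (ii) max min(L(x_s,x_t), U(x_s,x_t)) ≤ β ≤ min max(L(x_s,x_t), U(x_s,x_t)), where the maximum and minimum are taken over all pairs (x_s,x_t) with ζ_s(x_s) ≠ 0 and ζ_t(x_t) ≠ 0 (such pairs exist since π̃_s and π̃_t are nondegenerate). -/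
open Finset

lemma key_stmt6 (p q A β : ℝ) (hq : 0 < q) (hA : A ≠ 0) :
    (p + β * A / q ∈ Set.Icc (0:ℝ) 1) ↔
    (min (-(p*q)/A) ((1-p)*q/A) ≤ β ∧ β ≤ max (-(p*q)/A) ((1-p)*q/A)) := by
  have heq : p + β * A / q = (p*q + β*A)/q := by field_simp
  rw [Set.mem_Icc, heq]
  have h1 : (0 ≤ (p*q + β*A)/q) ↔ -(p*q) ≤ β*A := by
    rw [le_div_iff₀ hq]; constructor <;> intro h <;> linarith
  have h2 : ((p*q + β*A)/q ≤ 1) ↔ β*A ≤ (1-p)*q := by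
    rw [div_le_one hq]; constructor <;> intro h <;> nlinarith
  rw [h1, h2]
  have hle : -(p*q) ≤ (1-p)*q := by nlinarith
  rcases hA.lt_or_gt with hA | hA
  · rw [min_eq_right (by rw [div_le_div_right_of_neg hA]; exact hle),
      max_eq_left (by rw [div_le_div_right_of_neg hA]; exact hle),
      div_le_iff_of_neg hA, le_div_iff_of_neg hA]
    tauto
  · rw [min_eq_left (by rw [div_le_div_iff_of_pos_right hA]; exact hle),
      max_eq_right (by rw [div_le_div_iff_of_pos_right hA]; exact hle),
      div_le_iff₀ hA, le_div_iff₀ hA]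

theorem stmt6 (Xs Xt : Finset ℝ) (πs πt pts ptt : ℝ → ℝ) (β : ℝ)
    (hXs : Xs.Nonempty) (hXt : Xt.Nonempty)
    (hπs_pos : ∀ x ∈ Xs, 0 < πs x) (hπs_sum : ∑ x ∈ Xs, πs x = 1)
    (hπt_pos : ∀ y ∈ Xt, 0 < πt y) (hπt_sum : ∑ y ∈ Xt, πt y = 1)
    (hpts_nn : ∀ x ∈ Xs, 0 ≤ pts x) (hpts_sum : ∑ x ∈ Xs, pts x = 1)
    (hpts_nd : 1 < (Xs.filter fun x => pts x ≠ 0).card)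
    (hptt_nn : ∀ y ∈ Xt, 0 ≤ ptt y) (hptt_sum : ∑ y ∈ Xt, ptt y = 1)
    (hptt_nd : 1 < (Xt.filter fun y => ptt y ≠ 0).card) :
    -- (i) the conditional probabilities of (2.5) all lie in [0,1]
    (∀ x ∈ Xs, ∀ y ∈ Xt,
        πs x + zetaF Xs pts x * β * zetaF Xt ptt y / πt y ∈ Set.Icc (0 : ℝ) 1) ↔
    -- (ii) `β` lies between the max of the mins and the min of the maxes of `L` and `U`
    (∀ x ∈ Xs, ∀ y ∈ Xt, zetaF Xs pts x ≠ 0 → zetaF Xt ptt y ≠ 0 →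
        min (-(πs x * πt y) / (zetaF Xs pts x * zetaF Xt ptt y))
            ((1 - πs x) * πt y / (zetaF Xs pts x * zetaF Xt ptt y)) ≤ β ∧
        β ≤ max (-(πs x * πt y) / (zetaF Xs pts x * zetaF Xt ptt y))
            ((1 - πs x) * πt y / (zetaF Xs pts x * zetaF Xt ptt y))) := by
  constructor
  · intro h x hx y hy hzs hzt
    have hA : zetaF Xs pts x * zetaF Xt ptt y ≠ 0 := mul_ne_zero hzs hzt
    have := h x hx y hy
    rw [show zetaF Xs pts x * β * zetaF Xt ptt y / πt y
        = β * (zetaF Xs pts x * zetaF Xt ptt y) / πt y by ring] at this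
    exact (key_stmt6 (πs x) (πt y) _ β (hπt_pos y hy) hA).mp this
  · intro h x hx y hy
    by_cases hzs : zetaF Xs pts x = 0
    · simp [hzs]
      constructor
      · exact (hπs_pos x hx).le
      · rw [← hπs_sum]
        exact Finset.single_le_sum (fun i hi => (hπs_pos i hi).le) hx
    by_cases hzt : zetaF Xt ptt y = 0
    · simp [hzt]
      constructor
      · exact (hπs_pos x hx).le
      · rw [← hπs_sum]
        exact Finset.single_le_sum (fun i hi => (hπs_pos i hi).le) hx
    have hA : zetaF Xs pts x * zetaF Xt ptt y ≠ 0 := mul_ne_zero hzs hzt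
    rw [show zetaF Xs pts x * β * zetaF Xt ptt y / πt y
        = β * (zetaF Xs pts x * zetaF Xt ptt y) / πt y by ring]
    exact (key_stmt6 (πs x) (πt y) _ β (hπt_pos y hy) hA).mpr (h x hx y hy hzs hzt)
end

section
/- Let s be an index and A a finite nonempty set of indices not containing s, with data as in the context for s and for each t ∈ A, and let β ∈ ℝ be a common number. Suppose that for every t ∈ A and all x_s ∈ X_s, x_t ∈ X_t one has π_s(x_s) + ζ_s(x_s)·β·ζ_t(x_t)/π_t(x_t) ∈ [0,1]. Then max min(L_t(x_s,x_t), U_t(x_s,x_t)) ≤ β ≤ min max(L_t(x_s,x_t), U_t(x_s,x_t)), where L_t(x_s,x_t) = −π_s(x_s)π_t(x_t)/(ζ_s(x_s)ζ_t(x_t)), U_t(x_s,x_t) = (1−π_s(x_s))π_t(x_t)/(ζ_s(x_s)ζ_t(x_t)), and the maximum and minimum run over all t ∈ A and all pairs (x_s,x_t) with ζ_s(x_s) ≠ 0 and ζ_t(x_t) ≠ 0. -/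
open Finset

theorem stmt9 {ι : Type*} [Fintype ι] [Nonempty ι]
    -- data at the extra site `s` (not a member of the nonempty index set `ι` of `A`)
    (Xs : Finset ℝ) (πs pts : ℝ → ℝ)
    -- data at the sites of `A`
    (X : ι → Finset ℝ) (π pt : ι → ℝ → ℝ)
    -- the common covariance value
    (β : ℝ)
    (hXsne : Xs.Nonempty)
    (hπs_pos : ∀ x ∈ Xs, 0 < πs x) (hπs_sum : ∑ x ∈ Xs, πs x = 1)
    (hpts_nn : ∀ x ∈ Xs, 0 ≤ pts x) (hpts_sum : ∑ x ∈ Xs, pts x = 1)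
    (hpts_nd : 1 < (Xs.filter fun x => pts x ≠ 0).card)
    (hXne : ∀ t, (X t).Nonempty)
    (hπ_pos : ∀ t, ∀ x ∈ X t, 0 < π t x) (hπ_sum : ∀ t, ∑ x ∈ X t, π t x = 1)
    (hpt_nn : ∀ t, ∀ x ∈ X t, 0 ≤ pt t x) (hpt_sum : ∀ t, ∑ x ∈ X t, pt t x = 1)
    (hpt_nd : ∀ t, 1 < ((X t).filter fun x => pt t x ≠ 0).card)
    -- the conditional probabilities of (2.5) all lie in [0,1]
    (hcond : ∀ t : ι, ∀ x ∈ Xs, ∀ y ∈ X t,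
      πs x + zetaF Xs pts x * β * zetaF (X t) (pt t) y / π t y ∈ Set.Icc (0 : ℝ) 1) :
    -- then `β` lies between the max of the mins and the min of the maxes of `L_t` and `U_t`
    ∀ t : ι, ∀ x ∈ Xs, ∀ y ∈ X t, zetaF Xs pts x ≠ 0 → zetaF (X t) (pt t) y ≠ 0 →
      min (-(πs x * π t y) / (zetaF Xs pts x * zetaF (X t) (pt t) y))
          ((1 - πs x) * π t y / (zetaF Xs pts x * zetaF (X t) (pt t) y)) ≤ β ∧
      β ≤ max (-(πs x * π t y) / (zetaF Xs pts x * zetaF (X t) (pt t) y))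
          ((1 - πs x) * π t y / (zetaF Xs pts x * zetaF (X t) (pt t) y)) := by

  intro t x hx y hy hzs hzt
  obtain ⟨h0, h1⟩ := hcond t x hx y hy
  have hπt : 0 < π t y := hπ_pos t y hy
  set a := zetaF Xs pts x
  set b := zetaF (X t) (pt t) y
  have hc : a * b ≠ 0 := mul_ne_zero hzs hzt
  have key : a * β * b / π t y * π t y = a * b * β := by
    field_simp
  have hlow : -(πs x * π t y) ≤ a * b * β := by
    have := mul_le_mul_of_nonneg_right h0 hπt.le
    rw [zero_mul, add_mul, key] at this
    linarith
  have hhigh : a * b * β ≤ (1 - πs x) * π t y := by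
    have := mul_le_mul_of_nonneg_right h1 hπt.le
    rw [one_mul, add_mul, key] at this
    linarith
  rcases hc.lt_or_gt with hneg | hpos
  · constructor
    · refine le_trans (min_le_right _ _) ?_
      rw [div_le_iff_of_neg hneg]
      linarith
    · refine le_trans ?_ (le_max_left _ _)
      rw [le_div_iff_of_neg hneg]
      linarith
  · constructor
    · refine le_trans (min_le_left _ _) ?_
      rw [div_le_iff₀ hpos]
      linarith
    · refine le_trans ?_ (le_max_right _ _)
      rw [le_div_iff₀ hpos]
      linarith
end

section
/- Let n ≥ 2 and let Π_n be the KNW closed-form function for the data (π_i, π̃_i, π̂_i, β_{ij})_{1≤i≤n}. Then for every 1 ≤ j ≤ n and all fixed values x_k ∈ X_k (k ≠ j): ∑_{x_j ∈ X_j} Π_n(x_1,…,x_n) = Π'_{n−1}(x_1,…,x_{j−1},x_{j+1},…,x_n), where Π'_{n−1} is the KNW closed-form function for the index sequence (1,…,j−1,j+1,…,n) in the induced order, with the same pmfs π, π̃, π̂ and the same numbers β restricted to the remaining indices (the marginality property). -/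
open Finset

/-- `μ̃_i`, the mean of the pmf `pt i` on `X i`. -/
noncomputable def muN (X : ℕ → Finset ℝ) (pt : ℕ → ℝ → ℝ) (i : ℕ) : ℝ :=
  ∑ x ∈ X i, pt i x * x

/-- `σ̃²_i`, the variance of the pmf `pt i` on `X i`. -/
noncomputable def sig2N (X : ℕ → Finset ℝ) (pt : ℕ → ℝ → ℝ) (i : ℕ) : ℝ :=
  ∑ x ∈ X i, pt i x * (x - muN X pt i) ^ 2

/-- `ζ_i(x) = π̃_i(x)(x − μ̃_i)/σ̃²_i`. -/
noncomputable def zetaN (X : ℕ → Finset ℝ) (pt : ℕ → ℝ → ℝ) (i : ℕ) (x : ℝ) : ℝ :=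
  pt i x * (x - muN X pt i) / sig2N X pt i

/-- The KNW closed-form function for the index sequence `σ(1), …, σ(m)`:
`Π(x) = ∏_{i=1}^m π_{σ(i)}(x_{σ(i)})
  + ∑_{i=2}^m [ ζ_{σ(i)}(x_{σ(i)}) ∑_{j=1}^{i−1} (∏_{k≤i−1, k≠j} π̂_{σ(k)}(x_{σ(k)}))
      β_{σ(i)σ(j)} ζ_{σ(j)}(x_{σ(j)}) ] ∏_{k=i+1}^m π_{σ(k)}(x_{σ(k)})`. -/
noncomputable def knwClosedF (X : ℕ → Finset ℝ) (π πh pt : ℕ → ℝ → ℝ) (β : ℕ → ℕ → ℝ)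
    (m : ℕ) (σ : ℕ → ℕ) (x : ℕ → ℝ) : ℝ :=
  (∏ i ∈ Finset.Icc 1 m, π (σ i) (x (σ i))) +
    ∑ i ∈ Finset.Icc 2 m,
      (zetaN X pt (σ i) (x (σ i)) *
          ∑ j ∈ Finset.Icc 1 (i - 1),
            (∏ k ∈ (Finset.Icc 1 (i - 1)).erase j, πh (σ k) (x (σ k))) *
              β (σ i) (σ j) * zetaN X pt (σ j) (x (σ j))) *
        ∏ k ∈ Finset.Icc (i + 1) m, π (σ k) (x (σ k))

lemma image_g_eq {j a b c d : ℕ}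
    (hd : ∀ i : ℕ, ((a ≤ i ∧ i ≤ b ∧ i < j) ∨ (a ≤ i - 1 ∧ i - 1 ≤ b ∧ j ≤ i - 1 ∧ 1 ≤ i)) ↔
      (i ≠ j ∧ c ≤ i ∧ i ≤ d)) :
    Finset.image (fun k => if k < j then k else k + 1) (Finset.Icc a b)
      = (Finset.Icc c d).erase j := by
  ext i
  simp only [Finset.mem_image, Finset.mem_Icc, Finset.mem_erase]
  constructor
  · rintro ⟨k, hk, rfl⟩
    by_cases hkj : k < j
    · rw [if_pos hkj]
      exact (hd k).mp (Or.inl ⟨hk.1, hk.2, hkj⟩)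
    · rw [if_neg hkj]
      exact (hd (k + 1)).mp (Or.inr ⟨by omega, by omega, by omega, by omega⟩)
  · intro h
    rcases (hd i).mpr ⟨h.1, h.2.1, h.2.2⟩ with h' | h'
    · exact ⟨i, ⟨h'.1, h'.2.1⟩, if_pos h'.2.2⟩
    · exact ⟨i - 1, ⟨h'.1, h'.2.1⟩, by rw [if_neg (by omega)]; omega⟩

lemma prodUpd_notMem {x : ℕ → ℝ} {j : ℕ} {y : ℝ} {s : Finset ℕ} (h : j ∉ s)
    (f : ℕ → ℝ → ℝ) :
    ∏ k ∈ s, f k (Function.update x j y k) = ∏ k ∈ s, f k (x k) :=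
  Finset.prod_congr rfl fun k hk => by
    rw [Function.update_of_ne (by rintro rfl; exact h hk)]

lemma prodUpd_mem {x : ℕ → ℝ} {j : ℕ} {y : ℝ} {s : Finset ℕ} (h : j ∈ s)
    (f : ℕ → ℝ → ℝ) :
    ∏ k ∈ s, f k (Function.update x j y k) = f j y * ∏ k ∈ s.erase j, f k (x k) := by
  rw [← Finset.mul_prod_erase _ _ h, Function.update_self]
  congr 1
  exact prodUpd_notMem (Finset.notMem_erase _ _) _

noncomputable def knwF (X : ℕ → Finset ℝ) (π πh pt : ℕ → ℝ → ℝ) (β : ℕ → ℕ → ℝ)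
    (n j : ℕ) (x : ℕ → ℝ) (i : ℕ) : ℝ :=
  (zetaN X pt i (x i) *
      ∑ j' ∈ (Finset.Icc 1 (i - 1)).erase j,
        (∏ k ∈ ((Finset.Icc 1 (i - 1)).erase j).erase j', πh k (x k)) * β i j' *
          zetaN X pt j' (x j')) *
    ∏ k ∈ (Finset.Icc (i + 1) n).erase j, π k (x k)


theorem stmt11 (n : ℕ) (hn : 2 ≤ n)
    (X : ℕ → Finset ℝ) (π πh pt : ℕ → ℝ → ℝ) (β : ℕ → ℕ → ℝ)
    (hXne : ∀ i ∈ Finset.Icc 1 n, (X i).Nonempty)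
    (hπ_pos : ∀ i ∈ Finset.Icc 1 n, ∀ x ∈ X i, 0 < π i x)
    (hπ_sum : ∀ i ∈ Finset.Icc 1 n, ∑ x ∈ X i, π i x = 1)
    (hpt_nn : ∀ i ∈ Finset.Icc 1 n, ∀ x ∈ X i, 0 ≤ pt i x)
    (hpt_sum : ∀ i ∈ Finset.Icc 1 n, ∑ x ∈ X i, pt i x = 1)
    (hpt_nd : ∀ i ∈ Finset.Icc 1 n, 1 < ((X i).filter fun x => pt i x ≠ 0).card)
    (hph_nn : ∀ i ∈ Finset.Icc 1 n, ∀ x ∈ X i, 0 ≤ πh i x)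
    (hph_sum : ∀ i ∈ Finset.Icc 1 n, ∑ x ∈ X i, πh i x = 1)
    (hβ_symm : ∀ i ∈ Finset.Icc 1 n, ∀ j ∈ Finset.Icc 1 n, β i j = β j i)
    :
    -- marginality: summing out the coordinate `x_j` of the KNW closed-form function
    -- yields the KNW closed-form function for the index sequence `(1,…,j−1,j+1,…,n)`
    ∀ j ∈ Finset.Icc 1 n, ∀ x : ℕ → ℝ, (∀ i ∈ Finset.Icc 1 n, i ≠ j → x i ∈ X i) →
      ∑ y ∈ X j, knwClosedF X π πh pt β n id (Function.update x j y) =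
        knwClosedF X π πh pt β (n - 1) (fun k => if k < j then k else k + 1) x := by
  intro j hj x _
  rw [Finset.mem_Icc] at hj
  obtain ⟨hj1, hjn⟩ := hj
  have hjIcc : j ∈ Finset.Icc 1 n := Finset.mem_Icc.mpr ⟨hj1, hjn⟩
  have hπj : ∑ y ∈ X j, π j y = 1 := hπ_sum j hjIcc
  have hphj : ∑ y ∈ X j, πh j y = 1 := hph_sum j hjIcc
  have hzj : ∑ y ∈ X j, zetaN X pt j y = 0 := by
    have h0 : ∑ y ∈ X j, pt j y * (y - muN X pt j) = 0 := by
      have e : ∑ y ∈ X j, pt j y * (y - muN X pt j)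
          = (∑ y ∈ X j, pt j y * y) - (∑ y ∈ X j, pt j y) * muN X pt j := by
        rw [Finset.sum_mul, ← Finset.sum_sub_distrib]
        exact Finset.sum_congr rfl fun y _ => by ring
      rw [e, hpt_sum j hjIcc, one_mul, muN, sub_self]
    simp only [zetaN, div_eq_mul_inv, ← Finset.sum_mul, h0, zero_mul]
  set g : ℕ → ℕ := fun k => if k < j then k else k + 1 with hg
  have hginj : Function.Injective g := by
    intro a b hab
    simp only [hg] at hab
    split_ifs at hab <;> omega
  have hginj' : ∀ (s : Finset ℕ), ∀ a ∈ s, ∀ b ∈ s, g a = g b → a = b :=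
    fun s a _ b _ h => hginj h
  simp only [knwClosedF, id_eq]
  rw [Finset.sum_add_distrib, Finset.sum_comm]
  have h1 : ∑ y ∈ X j, ∏ i ∈ Finset.Icc 1 n, π i (Function.update x j y i)
      = ∏ i ∈ (Finset.Icc 1 n).erase j, π i (x i) := by
    rw [Finset.sum_congr rfl fun y _ => prodUpd_mem hjIcc π, ← Finset.sum_mul, hπj, one_mul]
  have esum : ∀ i : ℕ, j ∉ Finset.Icc 1 (i - 1) → ∀ y : ℝ,
      (∑ j' ∈ Finset.Icc 1 (i - 1),
        (∏ k ∈ (Finset.Icc 1 (i - 1)).erase j', πh k (Function.update x j y k)) * β i j' *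
          zetaN X pt j' (Function.update x j y j'))
      = ∑ j' ∈ Finset.Icc 1 (i - 1),
        (∏ k ∈ (Finset.Icc 1 (i - 1)).erase j', πh k (x k)) * β i j' * zetaN X pt j' (x j') :=
    fun i hnm y => Finset.sum_congr rfl fun j' hj' => by
      rw [Function.update_of_ne (by rintro rfl; exact hnm hj'),
        prodUpd_notMem (fun hmem => hnm (Finset.mem_of_mem_erase hmem)) πh]
  have key : ∀ i : ℕ, 2 ≤ i → i ≤ n → i ≠ j →
      ∑ y ∈ X j,
        (zetaN X pt i (Function.update x j y i) *
            ∑ j' ∈ Finset.Icc 1 (i - 1),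
              (∏ k ∈ (Finset.Icc 1 (i - 1)).erase j', πh k (Function.update x j y k)) * β i j' *
                zetaN X pt j' (Function.update x j y j')) *
          ∏ k ∈ Finset.Icc (i + 1) n, π k (Function.update x j y k)
        = knwF X π πh pt β n j x i := by
    intro i hi2 hin hij
    by_cases hlt : i < j
    · have hnotmem : j ∉ Finset.Icc 1 (i - 1) := by simp only [Finset.mem_Icc]; omega
      have e : ∀ y ∈ X j,
          (zetaN X pt i (Function.update x j y i) *
              ∑ j' ∈ Finset.Icc 1 (i - 1),
                (∏ k ∈ (Finset.Icc 1 (i - 1)).erase j', πh k (Function.update x j y k)) * β i j' *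
                  zetaN X pt j' (Function.update x j y j')) *
            ∏ k ∈ Finset.Icc (i + 1) n, π k (Function.update x j y k)
          = ((zetaN X pt i (x i) *
              ∑ j' ∈ Finset.Icc 1 (i - 1),
                (∏ k ∈ (Finset.Icc 1 (i - 1)).erase j', πh k (x k)) * β i j' *
                  zetaN X pt j' (x j')) *
              ∏ k ∈ (Finset.Icc (i + 1) n).erase j, π k (x k)) * π j y := by
        intro y _
        rw [Function.update_of_ne (show i ≠ j by omega), esum i hnotmem y,
          prodUpd_mem (Finset.mem_Icc.mpr ⟨by omega, hjn⟩) π]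
        ring
      rw [Finset.sum_congr rfl e, ← Finset.mul_sum, hπj, mul_one]
      simp only [knwF, Finset.erase_eq_of_notMem hnotmem]
    · have hjE : j ∈ Finset.Icc 1 (i - 1) := Finset.mem_Icc.mpr ⟨hj1, by omega⟩
      have hnt : j ∉ Finset.Icc (i + 1) n := by simp only [Finset.mem_Icc]; omega
      have e : ∀ y ∈ X j,
          (zetaN X pt i (Function.update x j y i) *
              ∑ j' ∈ Finset.Icc 1 (i - 1),
                (∏ k ∈ (Finset.Icc 1 (i - 1)).erase j', πh k (Function.update x j y k)) * β i j' *
                  zetaN X pt j' (Function.update x j y j')) *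
            ∏ k ∈ Finset.Icc (i + 1) n, π k (Function.update x j y k)
          = (zetaN X pt i (x i) * ∏ k ∈ Finset.Icc (i + 1) n, π k (x k)) *
              ∑ j' ∈ Finset.Icc 1 (i - 1),
                (∏ k ∈ (Finset.Icc 1 (i - 1)).erase j', πh k (Function.update x j y k)) * β i j' *
                  zetaN X pt j' (Function.update x j y j') := by
        intro y _
        rw [Function.update_of_ne (show i ≠ j by omega), prodUpd_notMem hnt π]
        ring
      rw [Finset.sum_congr rfl e, ← Finset.mul_sum, Finset.sum_comm,
        ← Finset.add_sum_erase _ _ hjE]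
      have ez : ∑ y ∈ X j,
          (∏ k ∈ (Finset.Icc 1 (i - 1)).erase j, πh k (Function.update x j y k)) * β i j *
            zetaN X pt j (Function.update x j y j) = 0 := by
        have e1 : ∀ y ∈ X j,
            (∏ k ∈ (Finset.Icc 1 (i - 1)).erase j, πh k (Function.update x j y k)) * β i j *
              zetaN X pt j (Function.update x j y j)
            = ((∏ k ∈ (Finset.Icc 1 (i - 1)).erase j, πh k (x k)) * β i j) *
                zetaN X pt j y := by
          intro y _
          rw [Function.update_self, prodUpd_notMem (Finset.notMem_erase _ _) πh]
        rw [Finset.sum_congr rfl e1, ← Finset.mul_sum, hzj, mul_zero]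
      rw [ez, zero_add]
      have e2 : ∀ j' ∈ (Finset.Icc 1 (i - 1)).erase j,
          ∑ y ∈ X j,
            (∏ k ∈ (Finset.Icc 1 (i - 1)).erase j', πh k (Function.update x j y k)) * β i j' *
              zetaN X pt j' (Function.update x j y j')
          = (∏ k ∈ ((Finset.Icc 1 (i - 1)).erase j).erase j', πh k (x k)) * β i j' *
              zetaN X pt j' (x j') := by
        intro j' hj'
        have hj'1 : j' ≠ j := Finset.ne_of_mem_erase hj'
        have hjmem : j ∈ (Finset.Icc 1 (i - 1)).erase j' :=
          Finset.mem_erase.mpr ⟨fun h => hj'1 h.symm, hjE⟩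
        have e3 : ∀ y ∈ X j,
            (∏ k ∈ (Finset.Icc 1 (i - 1)).erase j', πh k (Function.update x j y k)) * β i j' *
              zetaN X pt j' (Function.update x j y j')
            = πh j y * ((∏ k ∈ ((Finset.Icc 1 (i - 1)).erase j).erase j', πh k (x k)) * β i j' *
                zetaN X pt j' (x j')) := by
          intro y _
          rw [prodUpd_mem hjmem πh, Function.update_of_ne hj'1, Finset.erase_right_comm]
          ring
        rw [Finset.sum_congr rfl e3, ← Finset.sum_mul, hphj, one_mul]
      rw [Finset.sum_congr rfl e2]
      simp only [knwF, Finset.erase_eq_of_notMem hnt]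
      ring
  have keyj : 2 ≤ j →
      ∑ y ∈ X j,
        (zetaN X pt j (Function.update x j y j) *
            ∑ j' ∈ Finset.Icc 1 (j - 1),
              (∏ k ∈ (Finset.Icc 1 (j - 1)).erase j', πh k (Function.update x j y k)) * β j j' *
                zetaN X pt j' (Function.update x j y j')) *
          ∏ k ∈ Finset.Icc (j + 1) n, π k (Function.update x j y k) = 0 := by
    intro hj2
    have hnotmem : j ∉ Finset.Icc 1 (j - 1) := by simp only [Finset.mem_Icc]; omega
    have hnt : j ∉ Finset.Icc (j + 1) n := by simp only [Finset.mem_Icc]; omega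
    have e : ∀ y ∈ X j,
        (zetaN X pt j (Function.update x j y j) *
            ∑ j' ∈ Finset.Icc 1 (j - 1),
              (∏ k ∈ (Finset.Icc 1 (j - 1)).erase j', πh k (Function.update x j y k)) * β j j' *
                zetaN X pt j' (Function.update x j y j')) *
          ∏ k ∈ Finset.Icc (j + 1) n, π k (Function.update x j y k)
        = ((∑ j' ∈ Finset.Icc 1 (j - 1),
              (∏ k ∈ (Finset.Icc 1 (j - 1)).erase j', πh k (x k)) * β j j' *
                zetaN X pt j' (x j')) *
            ∏ k ∈ Finset.Icc (j + 1) n, π k (x k)) * zetaN X pt j y := by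
      intro y _
      rw [Function.update_self, esum j hnotmem y, prodUpd_notMem hnt π]
      ring
    rw [Finset.sum_congr rfl e, ← Finset.mul_sum, hzj, mul_zero]
  have h2 : ∑ i ∈ Finset.Icc 2 n, ∑ y ∈ X j,
        (zetaN X pt i (Function.update x j y i) *
            ∑ j' ∈ Finset.Icc 1 (i - 1),
              (∏ k ∈ (Finset.Icc 1 (i - 1)).erase j', πh k (Function.update x j y k)) * β i j' *
                zetaN X pt j' (Function.update x j y j')) *
          ∏ k ∈ Finset.Icc (i + 1) n, π k (Function.update x j y k)
      = ∑ i ∈ (Finset.Icc 2 n).erase j, knwF X π πh pt β n j x i := by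
    by_cases hj2 : 2 ≤ j
    · rw [← Finset.add_sum_erase _ _ (Finset.mem_Icc.mpr ⟨hj2, hjn⟩), keyj hj2, zero_add]
      exact Finset.sum_congr rfl fun i hi => by
        simp only [Finset.mem_erase, Finset.mem_Icc] at hi
        exact key i hi.2.1 hi.2.2 hi.1
    · rw [Finset.erase_eq_of_notMem (by simp only [Finset.mem_Icc]; omega)]
      exact Finset.sum_congr rfl fun i hi => by
        simp only [Finset.mem_Icc] at hi
        exact key i hi.1 hi.2 (by omega)
  rw [h1, h2]
  congr 1
  · have hE1 : Finset.image g (Finset.Icc 1 (n - 1)) = (Finset.Icc 1 n).erase j := by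
      rw [hg]; exact image_g_eq fun i => by omega
    rw [← hE1, Finset.prod_image (hginj' _)]
  · have hsub : Finset.image g (Finset.Icc 2 (n - 1)) ⊆ (Finset.Icc 2 n).erase j := by
      intro i hi
      simp only [Finset.mem_image, Finset.mem_Icc, hg] at hi
      obtain ⟨k, hk, rfl⟩ := hi
      simp only [Finset.mem_erase, Finset.mem_Icc]
      split_ifs <;> omega
    have hzero : ∀ i ∈ (Finset.Icc 2 n).erase j, i ∉ Finset.image g (Finset.Icc 2 (n - 1)) →
        knwF X π πh pt β n j x i = 0 := by
      intro i hi hni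
      simp only [Finset.mem_erase, Finset.mem_Icc] at hi
      have h21 : i = 2 ∧ j = 1 := by
        by_contra hcon
        apply hni
        simp only [Finset.mem_image, Finset.mem_Icc, hg]
        by_cases hlt : i < j
        · exact ⟨i, by omega, if_pos hlt⟩
        · exact ⟨i - 1, by omega, by rw [if_neg (by omega)]; omega⟩
      rw [h21.1, h21.2]
      norm_num [knwF]
    rw [← Finset.sum_subset hsub hzero, Finset.sum_image (hginj' _)]
    refine Finset.sum_congr rfl fun i'' hi'' => ?_
    simp only [Finset.mem_Icc] at hi''
    by_cases hc : i'' < j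
    · have hgi : g i'' = i'' := by simp only [hg]; exact if_pos hc
      rw [hgi]
      simp only [knwF]
      have hE2 : Finset.image g (Finset.Icc 1 (i'' - 1)) = (Finset.Icc 1 (i'' - 1)).erase j := by
        rw [hg]; exact image_g_eq fun i => by omega
      have hE3 : Finset.image g (Finset.Icc (i'' + 1) (n - 1))
          = (Finset.Icc (i'' + 1) n).erase j := by
        rw [hg]; exact image_g_eq fun i => by omega
      rw [← hE2, ← hE3, Finset.sum_image (hginj' _), Finset.prod_image (hginj' _)]
      refine congrArg₂ (· * ·) (congrArg₂ (· * ·) rfl (Finset.sum_congr rfl fun j' hj' => ?_)) rfl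
      rw [← Finset.image_erase hginj, Finset.prod_image (hginj' _)]
    · have hgi : g i'' = i'' + 1 := by simp only [hg]; exact if_neg hc
      rw [hgi]
      simp only [knwF, Nat.add_sub_cancel]
      have hE2 : Finset.image g (Finset.Icc 1 (i'' - 1)) = (Finset.Icc 1 i'').erase j := by
        rw [hg]; exact image_g_eq fun i => by omega
      have hE3 : Finset.image g (Finset.Icc (i'' + 1) (n - 1))
          = (Finset.Icc (i'' + 1 + 1) n).erase j := by
        rw [hg]; exact image_g_eq fun i => by omega
      rw [← hE2, ← hE3, Finset.sum_image (hginj' _), Finset.prod_image (hginj' _)]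
      refine congrArg₂ (· * ·) (congrArg₂ (· * ·) rfl (Finset.sum_congr rfl fun j' hj' => ?_)) rfl
      rw [← Finset.image_erase hginj, Finset.prod_image (hginj' _)]
end

section
/- Let n ≥ 2 and let Π_n be the KNW closed-form function, and assume Π_n(x) ≥ 0 for all x ∈ X_1×⋯×X_n. Then: (i) Π_n is a probability mass function (its total sum is 1); (ii) for every i, the single-coordinate marginal of Π_n at i equals π_i; (iii) for every pair i < j, the two-coordinate marginal of Π_n on (i,j) equals π_i(x_i)π_j(x_j) + ζ_i(x_i)β_{ij}ζ_j(x_j); and (iv) for every pair i ≠ j, the covariance of the coordinates i and j under Π_n equals β_{ij}, i.e. ∑_x x_i x_j Π_n(x) − (∑_{y∈X_i} y π_i(y))(∑_{y∈X_j} y π_j(y)) = β_{ij}. -/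
open Finset

/-- `μ̃_i`, the mean of the pmf `pt i` on `X i`. -/
noncomputable def muI {n : ℕ} (X : Fin n → Finset ℝ) (pt : Fin n → ℝ → ℝ) (i : Fin n) : ℝ :=
  ∑ x ∈ X i, pt i x * x

/-- `σ̃²_i`, the variance of the pmf `pt i` on `X i`. -/
noncomputable def sig2I {n : ℕ} (X : Fin n → Finset ℝ) (pt : Fin n → ℝ → ℝ) (i : Fin n) : ℝ :=
  ∑ x ∈ X i, pt i x * (x - muI X pt i) ^ 2

/-- `ζ_i(x) = π̃_i(x)(x − μ̃_i)/σ̃²_i`. -/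
noncomputable def zetaI {n : ℕ} (X : Fin n → Finset ℝ) (pt : Fin n → ℝ → ℝ) (i : Fin n)
    (x : ℝ) : ℝ :=
  pt i x * (x - muI X pt i) / sig2I X pt i

/-- The KNW closed-form function
`Π_n(x) = ∏_i π_i(x_i)
  + ∑_i [ ζ_i(x_i) ∑_{j<i} (∏_{k<i,k≠j} π̂_k(x_k)) β_{ij} ζ_j(x_j) ] ∏_{k>i} π_k(x_k)`
(the term for the first index has an empty inner sum, so effectively `i` ranges
over the 2nd through `n`-th indices). -/
noncomputable def knwClosedFin {n : ℕ} (X : Fin n → Finset ℝ) (π πh pt : Fin n → ℝ → ℝ)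
    (β : Fin n → Fin n → ℝ) (x : Fin n → ℝ) : ℝ :=
  (∏ i, π i (x i)) +
    ∑ i,
      (zetaI X pt i (x i) *
          ∑ j ∈ Finset.univ.filter (fun j => j < i),
            (∏ k ∈ (Finset.univ.filter (fun k => k < i)).erase j, πh k (x k)) * β i j *
              zetaI X pt j (x j)) *
        ∏ k ∈ Finset.univ.filter (fun k => i < k), π k (x k)

/-!
Expanding the inner sum, `knwClosedFin` is `∏ k, π k (x k)` plus, for each pair `j < i`, the term
`β i j` times a product function whose factors are `ζ_i` and `ζ_j` at the coordinates `i` and `j`,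
and probability mass functions (`π̂_k` or `π_k`) elsewhere. Against a test function depending on at
most two coordinates, every such expectation factorizes over the coordinates. Since
`∑ ζ_l = 0`, a correction term survives only if both of its `ζ`-coordinates are tested, and since
`∑ x ζ_l(x) = 1`, the `(j, i)` term contributes exactly `β_{ij}` to the covariance of `x_i, x_j`.
-/

namespace KNW

variable {n : ℕ} (X : Fin n → Finset ℝ) (π πh pt : Fin n → ℝ → ℝ) (β : Fin n → Fin n → ℝ)

section Zeta

variable {X pt} {i : Fin n}

lemma sum_mul_sub_muI_eq_zero (h : ∑ x ∈ X i, pt i x = 1) :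
    ∑ x ∈ X i, pt i x * (x - muI X pt i) = 0 := by
  simp only [mul_sub, sum_sub_distrib, ← sum_mul, h, one_mul, muI, sub_self]

lemma sum_zetaI_eq_zero (h : ∑ x ∈ X i, pt i x = 1) : ∑ x ∈ X i, zetaI X pt i x = 0 := by
  simp only [zetaI, ← sum_div, sum_mul_sub_muI_eq_zero h, zero_div]

lemma sig2I_pos (hnn : ∀ x ∈ X i, 0 ≤ pt i x)
    (hnd : 1 < ((X i).filter fun x => pt i x ≠ 0).card) : 0 < sig2I X pt i := by
  have hterm : ∀ x ∈ X i, 0 ≤ pt i x * (x - muI X pt i) ^ 2 := fun x hx =>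
    mul_nonneg (hnn x hx) (sq_nonneg _)
  refine (sum_nonneg hterm).lt_of_ne fun hzero => hnd.not_ge (card_le_one.mpr ?_)
  have hmu : ∀ x ∈ (X i).filter fun x => pt i x ≠ 0, x = muI X pt i := by
    intro x hx
    rw [mem_filter] at hx
    simpa [hx.2, sub_eq_zero] using (sum_eq_zero_iff_of_nonneg hterm).mp hzero.symm x hx.1
  exact fun x hx y hy => (hmu x hx).trans (hmu y hy).symm

lemma sum_mul_zetaI_eq_one (h : ∑ x ∈ X i, pt i x = 1) (hs : sig2I X pt i ≠ 0) :
    ∑ x ∈ X i, x * zetaI X pt i x = 1 := by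
  have hsplit : ∀ x, x * zetaI X pt i x =
      (pt i x * (x - muI X pt i) ^ 2 + muI X pt i * (pt i x * (x - muI X pt i))) /
        sig2I X pt i := fun x => by
    rw [zetaI]; ring
  rw [sum_congr rfl fun x _ => hsplit x, ← sum_div, sum_add_distrib, ← mul_sum,
    sum_mul_sub_muI_eq_zero h, mul_zero, add_zero]
  exact div_self hs

end Zeta

/-- For `j < i`, the `(i, j)` correction term of `knwClosedFin` is
`β i j * ∏ k, factor i j k (x k)`. -/
noncomputable def factor (i j k : Fin n) : ℝ → ℝ :=
  if k = i then zetaI X pt i else if k = j then zetaI X pt j else if k < i then πh k else π k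

variable {X π πh pt β}

lemma factor_left (i j : Fin n) : factor X π πh pt i j i = zetaI X pt i := by
  simp [factor]

lemma factor_right {i j : Fin n} (h : j ≠ i) : factor X π πh pt i j j = zetaI X pt j := by
  simp [factor, h]

lemma sum_factor_of_ne (hπ : ∀ k, ∑ a ∈ X k, π k a = 1) (hπh : ∀ k, ∑ a ∈ X k, πh k a = 1)
    {i j k : Fin n} (hki : k ≠ i) (hkj : k ≠ j) : ∑ a ∈ X k, factor X π πh pt i j k a = 1 := by
  simp only [factor, if_neg hki, if_neg hkj]
  split_ifs
  exacts [hπh k, hπ k]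

lemma prod_factor {i j : Fin n} (hji : j < i) (x : Fin n → ℝ) :
    ∏ k, factor X π πh pt i j k (x k) =
      zetaI X pt i (x i) * zetaI X pt j (x j) *
        (∏ k ∈ (univ.filter (· < i)).erase j, πh k (x k)) *
        ∏ k ∈ univ.filter (i < ·), π k (x k) := by
  have hhigh : (univ.filter (¬ · < i)).erase i = univ.filter (i < ·) := by
    ext k
    simp only [mem_erase, mem_filter, mem_univ, true_and, not_lt]
    exact ⟨fun h => lt_of_le_of_ne h.2 (Ne.symm h.1), fun h => ⟨h.ne', h.le⟩⟩
  have hlow : ∏ k ∈ (univ.filter (· < i)).erase j, factor X π πh pt i j k (x k) =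
      ∏ k ∈ (univ.filter (· < i)).erase j, πh k (x k) := by
    refine prod_congr rfl fun k hk => ?_
    simp only [mem_erase, mem_filter, mem_univ, true_and] at hk
    simp [factor, hk.1, hk.2, hk.2.ne]
  have hup : ∏ k ∈ univ.filter (i < ·), factor X π πh pt i j k (x k) =
      ∏ k ∈ univ.filter (i < ·), π k (x k) := by
    refine prod_congr rfl fun k hk => ?_
    rw [mem_filter] at hk
    simp [factor, hk.2.ne', (hji.trans hk.2).ne', not_lt.mpr hk.2.le]
  rw [← prod_filter_mul_prod_filter_not univ (· < i),
    ← mul_prod_erase _ _ (mem_filter.mpr ⟨mem_univ j, hji⟩),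
    ← mul_prod_erase _ _ (mem_filter.mpr ⟨mem_univ i, lt_irrefl i⟩), hhigh, hlow, hup,
    factor_left, factor_right hji.ne]
  ring

lemma knwClosedFin_eq_prod_add_sum (x : Fin n → ℝ) :
    knwClosedFin X π πh pt β x = (∏ k, π k (x k)) +
      ∑ i, ∑ j ∈ univ.filter (· < i), β i j * ∏ k, factor X π πh pt i j k (x k) := by
  rw [knwClosedFin]
  congr 1
  refine sum_congr rfl fun i _ => ?_
  rw [mul_sum, sum_mul]
  refine sum_congr rfl fun j hj => ?_
  rw [prod_factor (mem_filter.mp hj).2]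
  ring

variable (X π πh pt β) in
/-- The contribution of the correction terms of `knwClosedFin` to the expectation of
`x ↦ ∏ k, w k (x k)`. -/
noncomputable def correctionMoment (w : Fin n → ℝ → ℝ) : ℝ :=
  ∑ i, ∑ j ∈ univ.filter (· < i), β i j * ∏ k, ∑ a ∈ X k, w k a * factor X π πh pt i j k a

lemma sum_prod_mul_knwClosedFin (w : Fin n → ℝ → ℝ) :
    ∑ x ∈ Fintype.piFinset X, (∏ k, w k (x k)) * knwClosedFin X π πh pt β x =
      (∏ k, ∑ a ∈ X k, w k a * π k a) + correctionMoment X π πh pt β w := by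
  simp only [knwClosedFin_eq_prod_add_sum, mul_add, mul_sum, sum_add_distrib, correctionMoment,
    prod_univ_sum, ← prod_mul_distrib]
  rw [sum_comm]
  refine congrArg _ (sum_congr rfl fun i _ => ?_)
  rw [sum_comm]
  refine sum_congr rfl fun j _ => ?_
  simp only [mul_left_comm _ (β i j), ← mul_sum, ← prod_mul_distrib]

lemma prod_sum_mul_factor_eq_zero (w : Fin n → ℝ → ℝ) {i j l : Fin n} (hji : j ≠ i)
    (hl : l = i ∨ l = j) (hpt : ∑ a ∈ X l, pt l a = 1) (hw : ∀ a, w l a = 1) :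
    ∏ k, ∑ a ∈ X k, w k a * factor X π πh pt i j k a = 0 := by
  refine prod_eq_zero (mem_univ l) ?_
  have hfac : factor X π πh pt i j l = zetaI X pt l := by
    rcases hl with rfl | rfl
    exacts [factor_left _ _, factor_right hji]
  simp only [hw, one_mul, hfac, sum_zetaI_eq_zero hpt]

lemma correctionMoment_eq_zero (hpt : ∀ k, ∑ a ∈ X k, pt k a = 1) {w : Fin n → ℝ → ℝ}
    (hw : ∀ i j, j < i → (∀ a, w i a = 1) ∨ ∀ a, w j a = 1) :
    correctionMoment X π πh pt β w = 0 := by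
  refine sum_eq_zero fun i _ => sum_eq_zero fun j hj => mul_eq_zero_of_right _ ?_
  have hji := (mem_filter.mp hj).2
  rcases hw i j hji with hwi | hwj
  exacts [prod_sum_mul_factor_eq_zero w hji.ne (Or.inl rfl) (hpt i) hwi,
    prod_sum_mul_factor_eq_zero w hji.ne (Or.inr rfl) (hpt j) hwj]

lemma correctionMoment_eq_of_pair (hπ : ∀ k, ∑ a ∈ X k, π k a = 1)
    (hπh : ∀ k, ∑ a ∈ X k, πh k a = 1) (hpt : ∀ k, ∑ a ∈ X k, pt k a = 1)
    {w : Fin n → ℝ → ℝ} {i j : Fin n} (hij : i < j)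
    (hw : ∀ l, l ≠ i → l ≠ j → ∀ a, w l a = 1) :
    correctionMoment X π πh pt β w =
      β j i * ((∑ a ∈ X j, w j a * zetaI X pt j a) * ∑ a ∈ X i, w i a * zetaI X pt i a) := by
  have hvanish : ∀ i' j', j' < i' → j' ≠ i ∨ i' ≠ j →
      β i' j' * ∏ k, ∑ a ∈ X k, w k a * factor X π πh pt i' j' k a = 0 := by
    intro i' j' hji' hne
    refine mul_eq_zero_of_right _ ?_
    by_cases hi' : i' = i
    · subst hi'
      exact prod_sum_mul_factor_eq_zero w hji'.ne (Or.inr rfl) (hpt j')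
        (hw j' hji'.ne (hji'.trans hij).ne)
    by_cases hj' : i' = j
    · exact prod_sum_mul_factor_eq_zero w hji'.ne (Or.inr rfl) (hpt j')
        (hw j' (hne.resolve_right (not_not.mpr hj')) (hj' ▸ hji'.ne))
    · exact prod_sum_mul_factor_eq_zero w hji'.ne (Or.inl rfl) (hpt i') (hw i' hi' hj')
  have hmem : i ∈ univ.filter (· < j) := mem_filter.mpr ⟨mem_univ i, hij⟩
  rw [correctionMoment, sum_eq_single j, sum_eq_single_of_mem i hmem]
  · rw [Fintype.prod_eq_mul j i hij.ne' fun k hk => ?_, factor_left, factor_right hij.ne]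
    simp only [hw k hk.2 hk.1, one_mul, sum_factor_of_ne hπ hπh hk.1 hk.2]
  · exact fun j' hj' hne => hvanish j j' (mem_filter.mp hj').2 (Or.inl hne)
  · exact fun i' _ hne => sum_eq_zero fun j' hj' =>
      hvanish i' j' (mem_filter.mp hj').2 (Or.inr hne)
  · exact fun h => absurd (mem_univ j) h

theorem sum_apply_mul_knwClosedFin (hπ : ∀ k, ∑ a ∈ X k, π k a = 1)
    (hpt : ∀ k, ∑ a ∈ X k, pt k a = 1) (i : Fin n) (f : ℝ → ℝ) :
    ∑ x ∈ Fintype.piFinset X, f (x i) * knwClosedFin X π πh pt β x = ∑ a ∈ X i, f a * π i a := by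
  set w := Function.update (fun (_ : Fin n) (_ : ℝ) => (1 : ℝ)) i f
  have hw : ∀ l ≠ i, ∀ a, w l a = 1 := fun l hl a => by simp [w, hl]
  have hwi : w i = f := by simp [w]
  have hprod : ∀ x : Fin n → ℝ, ∏ k, w k (x k) = f (x i) := fun x => by
    rw [Fintype.prod_eq_single i fun l hl => hw l hl _, hwi]
  have hmoment := sum_prod_mul_knwClosedFin (X := X) (π := π) (πh := πh) (pt := pt) (β := β) w
  simp only [hprod] at hmoment
  rw [hmoment, Fintype.prod_eq_single i fun l hl => by simp only [hw l hl, one_mul, hπ l], hwi,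
    correctionMoment_eq_zero hpt, add_zero]
  intro i' j' hji'
  by_cases h : i' = i
  · exact Or.inr (hw j' (h ▸ hji'.ne))
  · exact Or.inl (hw i' h)

theorem sum_apply_mul_apply_mul_knwClosedFin (hπ : ∀ k, ∑ a ∈ X k, π k a = 1)
    (hπh : ∀ k, ∑ a ∈ X k, πh k a = 1) (hpt : ∀ k, ∑ a ∈ X k, pt k a = 1)
    {i j : Fin n} (hij : i < j) (f g : ℝ → ℝ) :
    ∑ x ∈ Fintype.piFinset X, f (x i) * g (x j) * knwClosedFin X π πh pt β x =
      (∑ a ∈ X i, f a * π i a) * (∑ a ∈ X j, g a * π j a) +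
        β j i * ((∑ a ∈ X j, g a * zetaI X pt j a) * ∑ a ∈ X i, f a * zetaI X pt i a) := by
  set w := Function.update (Function.update (fun (_ : Fin n) (_ : ℝ) => (1 : ℝ)) i f) j g
  have hw : ∀ l, l ≠ i → l ≠ j → ∀ a, w l a = 1 := fun l hli hlj a => by simp [w, hli, hlj]
  have hwi : w i = f := by simp [w, hij.ne]
  have hwj : w j = g := by simp [w]
  have hprod : ∀ x : Fin n → ℝ, ∏ k, w k (x k) = f (x i) * g (x j) := fun x => by
    rw [Fintype.prod_eq_mul i j hij.ne fun l hl => hw l hl.1 hl.2 _, hwi, hwj]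
  have hmoment := sum_prod_mul_knwClosedFin (X := X) (π := π) (πh := πh) (pt := pt) (β := β) w
  simp only [hprod] at hmoment
  rw [hmoment, Fintype.prod_eq_mul i j hij.ne fun l hl => by
      simp only [hw l hl.1 hl.2, one_mul, hπ l],
    correctionMoment_eq_of_pair hπ hπh hpt hij hw, hwi, hwj]

theorem sum_knwClosedFin (hπ : ∀ k, ∑ a ∈ X k, π k a = 1) (hpt : ∀ k, ∑ a ∈ X k, pt k a = 1) :
    ∑ x ∈ Fintype.piFinset X, knwClosedFin X π πh pt β x = 1 := by
  have hmoment := sum_prod_mul_knwClosedFin (X := X) (π := π) (πh := πh) (pt := pt) (β := β)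
    fun _ _ => 1
  simp only [prod_const_one, one_mul] at hmoment
  rw [hmoment, prod_eq_one fun k _ => hπ k,
    correctionMoment_eq_zero hpt fun _ _ _ => Or.inl fun _ => rfl, add_zero]

theorem sum_filter_apply_eq_knwClosedFin (hπ : ∀ k, ∑ a ∈ X k, π k a = 1)
    (hpt : ∀ k, ∑ a ∈ X k, pt k a = 1) {i : Fin n} {a : ℝ} (ha : a ∈ X i) :
    ∑ x ∈ (Fintype.piFinset X).filter (fun z => z i = a), knwClosedFin X π πh pt β x =
      π i a := by
  simpa [sum_filter, ha] using
    sum_apply_mul_knwClosedFin (πh := πh) (β := β) hπ hpt i fun y => if y = a then 1 else 0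

theorem sum_filter_apply_apply_eq_knwClosedFin (hπ : ∀ k, ∑ a ∈ X k, π k a = 1)
    (hπh : ∀ k, ∑ a ∈ X k, πh k a = 1) (hpt : ∀ k, ∑ a ∈ X k, pt k a = 1)
    (hβ : ∀ i j, β i j = β j i) {i j : Fin n} (hij : i < j) {a b : ℝ} (ha : a ∈ X i)
    (hb : b ∈ X j) :
    ∑ x ∈ (Fintype.piFinset X).filter (fun z => z i = a ∧ z j = b),
      knwClosedFin X π πh pt β x = π i a * π j b + zetaI X pt i a * β i j * zetaI X pt j b := by
  have hweighted := sum_apply_mul_apply_mul_knwClosedFin (β := β) hπ hπh hpt hij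
    (fun y => if y = a then 1 else 0) fun y => if y = b then 1 else 0
  simp only [ite_zero_mul_ite_zero, mul_one, boole_mul, sum_ite_eq', ha, hb, if_true] at hweighted
  rw [sum_filter, hweighted, hβ]
  ring

theorem sum_mul_mul_knwClosedFin_sub_eq (hπ : ∀ k, ∑ a ∈ X k, π k a = 1)
    (hπh : ∀ k, ∑ a ∈ X k, πh k a = 1) (hpt : ∀ k, ∑ a ∈ X k, pt k a = 1)
    (hsig : ∀ k, sig2I X pt k ≠ 0) (hβ : ∀ i j, β i j = β j i) {i j : Fin n} (hne : i ≠ j) :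
    ∑ x ∈ Fintype.piFinset X, x i * x j * knwClosedFin X π πh pt β x -
      (∑ y ∈ X i, y * π i y) * (∑ y ∈ X j, y * π j y) = β i j := by
  rcases hne.lt_or_gt with hij | hji
  · rw [sum_apply_mul_apply_mul_knwClosedFin hπ hπh hpt hij (fun y => y) fun y => y,
      sum_mul_zetaI_eq_one (hpt i) (hsig i), sum_mul_zetaI_eq_one (hpt j) (hsig j), hβ]
    ring
  · rw [sum_congr rfl fun x _ => by rw [mul_comm (x i)],
      sum_apply_mul_apply_mul_knwClosedFin hπ hπh hpt hji (fun y => y) fun y => y,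
      sum_mul_zetaI_eq_one (hpt i) (hsig i), sum_mul_zetaI_eq_one (hpt j) (hsig j)]
    ring

end KNW

theorem stmt12_general (n : ℕ)
    (X : Fin n → Finset ℝ) (π πh pt : Fin n → ℝ → ℝ) (β : Fin n → Fin n → ℝ)
    (hπ_sum : ∀ i, ∑ x ∈ X i, π i x = 1)
    (hpt_nn : ∀ i, ∀ x ∈ X i, 0 ≤ pt i x) (hpt_sum : ∀ i, ∑ x ∈ X i, pt i x = 1)
    (hpt_nd : ∀ i, 1 < ((X i).filter fun x => pt i x ≠ 0).card)
    (hph_sum : ∀ i, ∑ x ∈ X i, πh i x = 1)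
    (hβ_symm : ∀ i j, β i j = β j i) :
    -- (i) it is a probability mass function
    (∑ x ∈ Fintype.piFinset X, knwClosedFin X π πh pt β x = 1) ∧
    -- (ii) its single-coordinate marginals are the `π_i`
    (∀ i : Fin n, ∀ a ∈ X i,
      ∑ x ∈ (Fintype.piFinset X).filter (fun z => z i = a),
        knwClosedFin X π πh pt β x = π i a) ∧
    -- (iii) its two-coordinate marginals
    (∀ i j : Fin n, i < j → ∀ a ∈ X i, ∀ b ∈ X j,
      ∑ x ∈ (Fintype.piFinset X).filter (fun z => z i = a ∧ z j = b),
        knwClosedFin X π πh pt β x =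
          π i a * π j b + zetaI X pt i a * β i j * zetaI X pt j b) ∧
    -- (iv) its covariances are the `β_{ij}`
    (∀ i j : Fin n, i ≠ j →
      ∑ x ∈ Fintype.piFinset X, x i * x j * knwClosedFin X π πh pt β x -
        (∑ y ∈ X i, y * π i y) * (∑ y ∈ X j, y * π j y) = β i j) := by
  have hsig : ∀ k, sig2I X pt k ≠ 0 := fun k => (KNW.sig2I_pos (hpt_nn k) (hpt_nd k)).ne'
  exact ⟨KNW.sum_knwClosedFin hπ_sum hpt_sum,
    fun i a ha => KNW.sum_filter_apply_eq_knwClosedFin hπ_sum hpt_sum ha,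
    fun i j hij a ha b hb =>
      KNW.sum_filter_apply_apply_eq_knwClosedFin hπ_sum hph_sum hpt_sum hβ_symm hij ha hb,
    fun i j hne => KNW.sum_mul_mul_knwClosedFin_sub_eq hπ_sum hph_sum hpt_sum hsig hβ_symm hne⟩

theorem stmt12 (n : ℕ) (hn : 2 ≤ n)
    (X : Fin n → Finset ℝ) (π πh pt : Fin n → ℝ → ℝ) (β : Fin n → Fin n → ℝ)
    (hXne : ∀ i, (X i).Nonempty)
    (hπ_pos : ∀ i, ∀ x ∈ X i, 0 < π i x) (hπ_sum : ∀ i, ∑ x ∈ X i, π i x = 1)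
    (hpt_nn : ∀ i, ∀ x ∈ X i, 0 ≤ pt i x) (hpt_sum : ∀ i, ∑ x ∈ X i, pt i x = 1)
    (hpt_nd : ∀ i, 1 < ((X i).filter fun x => pt i x ≠ 0).card)
    (hph_nn : ∀ i, ∀ x ∈ X i, 0 ≤ πh i x) (hph_sum : ∀ i, ∑ x ∈ X i, πh i x = 1)
    (hβ_symm : ∀ i j, β i j = β j i)
    -- assume the closed-form function is nonnegative on the configuration space
    (hnn : ∀ x ∈ Fintype.piFinset X, 0 ≤ knwClosedFin X π πh pt β x) :
    -- (i) it is a probability mass function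
    (∑ x ∈ Fintype.piFinset X, knwClosedFin X π πh pt β x = 1) ∧
    -- (ii) its single-coordinate marginals are the `π_i`
    (∀ i : Fin n, ∀ a ∈ X i,
      ∑ x ∈ (Fintype.piFinset X).filter (fun z => z i = a),
        knwClosedFin X π πh pt β x = π i a) ∧
    -- (iii) its two-coordinate marginals
    (∀ i j : Fin n, i < j → ∀ a ∈ X i, ∀ b ∈ X j,
      ∑ x ∈ (Fintype.piFinset X).filter (fun z => z i = a ∧ z j = b),
        knwClosedFin X π πh pt β x =
          π i a * π j b + zetaI X pt i a * β i j * zetaI X pt j b) ∧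
    -- (iv) its covariances are the `β_{ij}`
    (∀ i j : Fin n, i ≠ j →
      ∑ x ∈ Fintype.piFinset X, x i * x j * knwClosedFin X π πh pt β x -
        (∑ y ∈ X i, y * π i y) * (∑ y ∈ X j, y * π j y) = β i j) :=
  stmt12_general n X π πh pt β hπ_sum hpt_nn hpt_sum hpt_nd hph_sum hβ_symm
end

section
/- Let n ≥ 3. The family (Π_g)_{g a permutation of {1,…,n}} has the permutation property (i.e. Π_g(x_1,…,x_n) = Π_e(x_1,…,x_n) for every permutation g and all x ∈ X_1×⋯×X_n) if and only if for every triple of distinct indices i,j,k in {1,…,n} and all x_i ∈ X_i, x_j ∈ X_j, x_k ∈ X_k: β_{ij} ζ_i(x_i) ζ_j(x_j) (π_k(x_k) − π̂_k(x_k)) = β_{ik} ζ_i(x_i) ζ_k(x_k) (π_j(x_j) − π̂_j(x_j)) = β_{jk} ζ_j(x_j) ζ_k(x_k) (π_i(x_i) − π̂_i(x_i)). -/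
open Finset

noncomputable def knwTerm (X : ℕ → Finset ℝ) (π πh pt : ℕ → ℝ → ℝ) (β : ℕ → ℕ → ℝ)
    (n : ℕ) (σ : ℕ → ℕ) (x : ℕ → ℝ) (i : ℕ) : ℝ :=
  (zetaN X pt (σ i) (x (σ i)) *
      ∑ j ∈ Finset.Icc 1 (i - 1),
        (∏ k ∈ (Finset.Icc 1 (i - 1)).erase j, πh (σ k) (x (σ k))) *
          β (σ i) (σ j) * zetaN X pt (σ j) (x (σ j))) *
    ∏ k ∈ Finset.Icc (i + 1) n, π (σ k) (x (σ k))

lemma knwClosedF_eq (X : ℕ → Finset ℝ) (π πh pt : ℕ → ℝ → ℝ) (β : ℕ → ℕ → ℝ)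
    (n : ℕ) (σ : ℕ → ℕ) (x : ℕ → ℝ) :
    knwClosedF X π πh pt β n σ x =
      (∏ i ∈ Finset.Icc 1 n, π (σ i) (x (σ i))) +
        ∑ i ∈ Finset.Ioc 1 n, knwTerm X π πh pt β n σ x i := by
  rw [knwClosedF, ← Finset.Icc_add_one_left_eq_Ioc]; rfl

lemma swap_mem_iff {t : ℕ} {S : Finset ℕ} (h : t ∈ S ↔ t + 1 ∈ S) (k : ℕ) :
    Equiv.swap t (t + 1) k ∈ S ↔ k ∈ S := by
  rcases eq_or_ne k t with rfl | h1
  · rw [Equiv.swap_apply_left]; exact h.symm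
  rcases eq_or_ne k (t + 1) with rfl | h2
  · rw [Equiv.swap_apply_right]; exact h
  · rw [Equiv.swap_apply_of_ne_of_ne h1 h2]

lemma knwTerm_swap_eq (X : ℕ → Finset ℝ) (π πh pt : ℕ → ℝ → ℝ) (β : ℕ → ℕ → ℝ)
    (n t : ℕ) (ht1 : 1 ≤ t) (htn : t + 1 ≤ n) (σ : ℕ → ℕ) (x : ℕ → ℝ)
    (i : ℕ) (hi2 : 2 ≤ i) (hit : i ≠ t) (hit1 : i ≠ t + 1) :
    knwTerm X π πh pt β n (σ ∘ Equiv.swap t (t + 1)) x i = knwTerm X π πh pt β n σ x i := by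
  have hsi : (Equiv.swap t (t + 1)) i = i := Equiv.swap_apply_of_ne_of_ne hit hit1
  have hIccmem : t ∈ Finset.Icc 1 (i - 1) ↔ t + 1 ∈ Finset.Icc 1 (i - 1) := by
    simp only [Finset.mem_Icc]; omega
  have hsum : ∑ j ∈ Finset.Icc 1 (i - 1),
      (∏ k ∈ (Finset.Icc 1 (i - 1)).erase j, πh ((σ ∘ Equiv.swap t (t + 1)) k)
        (x ((σ ∘ Equiv.swap t (t + 1)) k))) *
        β ((σ ∘ Equiv.swap t (t + 1)) i) ((σ ∘ Equiv.swap t (t + 1)) j) *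
        zetaN X pt ((σ ∘ Equiv.swap t (t + 1)) j) (x ((σ ∘ Equiv.swap t (t + 1)) j)) =
      ∑ j ∈ Finset.Icc 1 (i - 1),
      (∏ k ∈ (Finset.Icc 1 (i - 1)).erase j, πh (σ k) (x (σ k))) *
        β (σ i) (σ j) * zetaN X pt (σ j) (x (σ j)) := by
    refine Finset.sum_equiv (Equiv.swap t (t + 1)) (fun j => (swap_mem_iff hIccmem j).symm) ?_
    intro j hj
    have hpe : (∏ k ∈ (Finset.Icc 1 (i - 1)).erase j,
        πh ((σ ∘ Equiv.swap t (t + 1)) k) (x ((σ ∘ Equiv.swap t (t + 1)) k))) =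
        ∏ k ∈ (Finset.Icc 1 (i - 1)).erase (Equiv.swap t (t + 1) j), πh (σ k) (x (σ k)) := by
      refine Finset.prod_equiv (Equiv.swap t (t + 1)) (fun k => ?_) (fun k _ => rfl)
      simp only [Finset.mem_erase]
      constructor
      · rintro ⟨hkj, hk⟩
        exact ⟨(Equiv.injective _).ne_iff.mpr hkj, (swap_mem_iff hIccmem k).mpr hk⟩
      · rintro ⟨hkj, hk⟩
        exact ⟨fun e => hkj (by rw [e]), (swap_mem_iff hIccmem k).mp hk⟩
    rw [hpe]
    simp only [Function.comp_apply, hsi]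
  have hprod : ∏ k ∈ Finset.Icc (i + 1) n,
      π ((σ ∘ Equiv.swap t (t + 1)) k) (x ((σ ∘ Equiv.swap t (t + 1)) k)) =
      ∏ k ∈ Finset.Icc (i + 1) n, π (σ k) (x (σ k)) := by
    refine Finset.prod_equiv (Equiv.swap t (t + 1)) (fun k => ?_) (fun k _ => rfl)
    refine (swap_mem_iff ?_ k).symm
    simp only [Finset.mem_Icc]; omega
  unfold knwTerm
  rw [hsum, hprod]
  simp only [Function.comp_apply, hsi]

lemma knwTerm_one (X : ℕ → Finset ℝ) (π πh pt : ℕ → ℝ → ℝ) (β : ℕ → ℕ → ℝ)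
    (n : ℕ) (σ : ℕ → ℕ) (x : ℕ → ℝ) : knwTerm X π πh pt β n σ x 1 = 0 := by
  have h : Finset.Icc 1 (1 - 1) = (∅ : Finset ℕ) := by
    rw [Finset.Icc_eq_empty] <;> omega
  simp [knwTerm, h]

lemma knw_swap (X : ℕ → Finset ℝ) (π πh pt : ℕ → ℝ → ℝ) (β : ℕ → ℕ → ℝ)
    (n t : ℕ) (ht1 : 1 ≤ t) (htn : t + 1 ≤ n) (σ : ℕ → ℕ) (x : ℕ → ℝ)
    (hβ : β (σ t) (σ (t + 1)) = β (σ (t + 1)) (σ t)) :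
    knwClosedF X π πh pt β n (σ ∘ Equiv.swap t (t + 1)) x =
      knwClosedF X π πh pt β n σ x -
        (∑ q ∈ Finset.Icc 1 (t - 1),
            (∏ k ∈ (Finset.Icc 1 (t - 1)).erase q, πh (σ k) (x (σ k))) *
              zetaN X pt (σ q) (x (σ q)) *
              (β (σ t) (σ q) * zetaN X pt (σ t) (x (σ t)) *
                  (π (σ (t + 1)) (x (σ (t + 1))) - πh (σ (t + 1)) (x (σ (t + 1)))) -
                β (σ (t + 1)) (σ q) * zetaN X pt (σ (t + 1)) (x (σ (t + 1))) *
                  (π (σ t) (x (σ t)) - πh (σ t) (x (σ t))))) *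
          ∏ k ∈ Finset.Icc (t + 2) n, π (σ k) (x (σ k)) := by
  classical
  have hA : Finset.Icc (t + 1) n = insert (t + 1) (Finset.Icc (t + 2) n) := by
    ext m; simp only [Finset.mem_Icc, Finset.mem_insert]; omega
  have hA' : t + 1 ∉ Finset.Icc (t + 2) n := by simp only [Finset.mem_Icc]; omega
  have hB : Finset.Icc 1 t = insert t (Finset.Icc 1 (t - 1)) := by
    ext m; simp only [Finset.mem_Icc, Finset.mem_insert]; omega
  have hB' : t ∉ Finset.Icc 1 (t - 1) := by simp only [Finset.mem_Icc]; omega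
  have hP : (∏ i ∈ Finset.Icc 1 n,
      π ((σ ∘ Equiv.swap t (t + 1)) i) (x ((σ ∘ Equiv.swap t (t + 1)) i))) =
      ∏ i ∈ Finset.Icc 1 n, π (σ i) (x (σ i)) := by
    refine Finset.prod_equiv (Equiv.swap t (t + 1))
      (fun i => (swap_mem_iff ?_ i).symm) (fun i _ => rfl)
    simp only [Finset.mem_Icc]; omega
  have hsplitA : ∀ τ : ℕ → ℕ, (∑ i ∈ Finset.Ioc 1 n, knwTerm X π πh pt β n τ x i) =
      ((∑ i ∈ Finset.Ioc 1 (t + 1), knwTerm X π πh pt β n τ x i) +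
        ∑ i ∈ Finset.Ioc (t + 1) n, knwTerm X π πh pt β n τ x i) :=
    fun τ => (Finset.sum_Ioc_consecutive _ (by omega) htn).symm
  have hsplitB : ∀ τ : ℕ → ℕ, (∑ i ∈ Finset.Ioc 1 (t + 1), knwTerm X π πh pt β n τ x i) =
      ((∑ i ∈ Finset.Ioc 1 (t - 1), knwTerm X π πh pt β n τ x i) +
        knwTerm X π πh pt β n τ x t) + knwTerm X π πh pt β n τ x (t + 1) := by
    intro τ
    rw [Finset.sum_Ioc_succ_top ht1]
    congr 1
    rcases eq_or_lt_of_le ht1 with h | h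
    · rw [← h]
      have h0' : Finset.Ioc 1 (1 - 1) = (∅ : Finset ℕ) := by
        rw [Finset.Ioc_eq_empty]; omega
      simp [knwTerm_one, h0']
    · have h1 : t - 1 + 1 = t := by omega
      have := Finset.sum_Ioc_succ_top (a := 1) (b := t - 1) (by omega)
        (knwTerm X π πh pt β n τ x)
      rw [h1] at this
      exact this
  have htail : (∑ i ∈ Finset.Ioc (t + 1) n,
      knwTerm X π πh pt β n (σ ∘ Equiv.swap t (t + 1)) x i) =
      ∑ i ∈ Finset.Ioc (t + 1) n, knwTerm X π πh pt β n σ x i :=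
    Finset.sum_congr rfl fun i hi => by
      rw [Finset.mem_Ioc] at hi
      exact knwTerm_swap_eq X π πh pt β n t ht1 htn σ x i (by omega) (by omega) (by omega)
  have hpre : (∑ i ∈ Finset.Ioc 1 (t - 1),
      knwTerm X π πh pt β n (σ ∘ Equiv.swap t (t + 1)) x i) =
      ∑ i ∈ Finset.Ioc 1 (t - 1), knwTerm X π πh pt β n σ x i :=
    Finset.sum_congr rfl fun i hi => by
      rw [Finset.mem_Ioc] at hi
      exact knwTerm_swap_eq X π πh pt β n t ht1 htn σ x i (by omega) (by omega) (by omega)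
  -- the four head terms
  have hT1 : knwTerm X π πh pt β n σ x t =
      (zetaN X pt (σ t) (x (σ t)) *
        ∑ q ∈ Finset.Icc 1 (t - 1),
          (∏ k ∈ (Finset.Icc 1 (t - 1)).erase q, πh (σ k) (x (σ k))) *
            β (σ t) (σ q) * zetaN X pt (σ q) (x (σ q))) *
      (π (σ (t + 1)) (x (σ (t + 1))) * ∏ k ∈ Finset.Icc (t + 2) n, π (σ k) (x (σ k))) := by
    unfold knwTerm
    rw [hA, Finset.prod_insert hA']
  have e2 : t + 1 - 1 = t := by omega
  have e4 : t + 1 + 1 = t + 2 := by omega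
  have hT2 : knwTerm X π πh pt β n σ x (t + 1) =
      zetaN X pt (σ (t + 1)) (x (σ (t + 1))) *
        ((∏ k ∈ Finset.Icc 1 (t - 1), πh (σ k) (x (σ k))) * β (σ (t + 1)) (σ t) *
            zetaN X pt (σ t) (x (σ t)) +
          πh (σ t) (x (σ t)) *
            ∑ q ∈ Finset.Icc 1 (t - 1),
              (∏ k ∈ (Finset.Icc 1 (t - 1)).erase q, πh (σ k) (x (σ k))) *
                β (σ (t + 1)) (σ q) * zetaN X pt (σ q) (x (σ q))) *
        ∏ k ∈ Finset.Icc (t + 2) n, π (σ k) (x (σ k)) := by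
    unfold knwTerm
    simp only [e2, e4]
    rw [hB, Finset.sum_insert hB', Finset.erase_insert hB']
    have hs : (∑ q ∈ Finset.Icc 1 (t - 1),
        (∏ k ∈ (insert t (Finset.Icc 1 (t - 1))).erase q, πh (σ k) (x (σ k))) *
          β (σ (t + 1)) (σ q) * zetaN X pt (σ q) (x (σ q))) =
        πh (σ t) (x (σ t)) *
          ∑ q ∈ Finset.Icc 1 (t - 1),
            (∏ k ∈ (Finset.Icc 1 (t - 1)).erase q, πh (σ k) (x (σ k))) *
              β (σ (t + 1)) (σ q) * zetaN X pt (σ q) (x (σ q)) := by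
      rw [Finset.mul_sum]
      refine Finset.sum_congr rfl fun q hq => ?_
      have hq' : t ≠ q := by rw [Finset.mem_Icc] at hq; omega
      rw [Finset.erase_insert_of_ne hq', Finset.prod_insert (by
        simp only [Finset.mem_erase, Finset.mem_Icc]; omega)]
      ring
    rw [hs]
  have hT3 : knwTerm X π πh pt β n (σ ∘ Equiv.swap t (t + 1)) x t =
      (zetaN X pt (σ (t + 1)) (x (σ (t + 1))) *
        ∑ q ∈ Finset.Icc 1 (t - 1),
          (∏ k ∈ (Finset.Icc 1 (t - 1)).erase q, πh (σ k) (x (σ k))) *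
            β (σ (t + 1)) (σ q) * zetaN X pt (σ q) (x (σ q))) *
      (π (σ t) (x (σ t)) * ∏ k ∈ Finset.Icc (t + 2) n, π (σ k) (x (σ k))) := by
    unfold knwTerm
    rw [hA, Finset.prod_insert hA']
    simp only [Function.comp_apply, Equiv.swap_apply_left, Equiv.swap_apply_right]
    have hsum : (∑ j ∈ Finset.Icc 1 (t - 1),
        (∏ k ∈ (Finset.Icc 1 (t - 1)).erase j,
            πh (σ (Equiv.swap t (t + 1) k)) (x (σ (Equiv.swap t (t + 1) k)))) *
          β (σ (t + 1)) (σ (Equiv.swap t (t + 1) j)) *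
          zetaN X pt (σ (Equiv.swap t (t + 1) j)) (x (σ (Equiv.swap t (t + 1) j)))) =
        ∑ q ∈ Finset.Icc 1 (t - 1),
          (∏ k ∈ (Finset.Icc 1 (t - 1)).erase q, πh (σ k) (x (σ k))) *
            β (σ (t + 1)) (σ q) * zetaN X pt (σ q) (x (σ q)) := by
      refine Finset.sum_congr rfl fun j hj => ?_
      rw [Finset.mem_Icc] at hj
      have hj' : Equiv.swap t (t + 1) j = j :=
        Equiv.swap_apply_of_ne_of_ne (by omega) (by omega)
      have hpr : (∏ k ∈ (Finset.Icc 1 (t - 1)).erase j,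
          πh (σ (Equiv.swap t (t + 1) k)) (x (σ (Equiv.swap t (t + 1) k)))) =
          ∏ k ∈ (Finset.Icc 1 (t - 1)).erase j, πh (σ k) (x (σ k)) := by
        refine Finset.prod_congr rfl fun k hk => ?_
        rw [Finset.mem_erase, Finset.mem_Icc] at hk
        rw [Equiv.swap_apply_of_ne_of_ne (by omega) (by omega)]
      rw [hj', hpr]
    have hC : (∏ k ∈ Finset.Icc (t + 2) n,
        π (σ (Equiv.swap t (t + 1) k)) (x (σ (Equiv.swap t (t + 1) k)))) =
        ∏ k ∈ Finset.Icc (t + 2) n, π (σ k) (x (σ k)) := by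
      refine Finset.prod_congr rfl fun k hk => ?_
      rw [Finset.mem_Icc] at hk
      rw [Equiv.swap_apply_of_ne_of_ne (by omega) (by omega)]
    rw [hsum, hC]
  have hT4 : knwTerm X π πh pt β n (σ ∘ Equiv.swap t (t + 1)) x (t + 1) =
      zetaN X pt (σ t) (x (σ t)) *
        ((∏ k ∈ Finset.Icc 1 (t - 1), πh (σ k) (x (σ k))) * β (σ t) (σ (t + 1)) *
            zetaN X pt (σ (t + 1)) (x (σ (t + 1))) +
          πh (σ (t + 1)) (x (σ (t + 1))) *
            ∑ q ∈ Finset.Icc 1 (t - 1),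
              (∏ k ∈ (Finset.Icc 1 (t - 1)).erase q, πh (σ k) (x (σ k))) *
                β (σ t) (σ q) * zetaN X pt (σ q) (x (σ q))) *
        ∏ k ∈ Finset.Icc (t + 2) n, π (σ k) (x (σ k)) := by
    unfold knwTerm
    simp only [e2, e4, Function.comp_apply, Equiv.swap_apply_left, Equiv.swap_apply_right]
    rw [hB, Finset.sum_insert hB', Finset.erase_insert hB']
    have hB2 : (∏ k ∈ Finset.Icc 1 (t - 1),
        πh (σ (Equiv.swap t (t + 1) k)) (x (σ (Equiv.swap t (t + 1) k)))) =
        ∏ k ∈ Finset.Icc 1 (t - 1), πh (σ k) (x (σ k)) := by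
      refine Finset.prod_congr rfl fun k hk => ?_
      rw [Finset.mem_Icc] at hk
      rw [Equiv.swap_apply_of_ne_of_ne (by omega) (by omega)]
    have hC : (∏ k ∈ Finset.Icc (t + 2) n,
        π (σ (Equiv.swap t (t + 1) k)) (x (σ (Equiv.swap t (t + 1) k)))) =
        ∏ k ∈ Finset.Icc (t + 2) n, π (σ k) (x (σ k)) := by
      refine Finset.prod_congr rfl fun k hk => ?_
      rw [Finset.mem_Icc] at hk
      rw [Equiv.swap_apply_of_ne_of_ne (by omega) (by omega)]
    have hs : (∑ q ∈ Finset.Icc 1 (t - 1),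
        (∏ k ∈ (insert t (Finset.Icc 1 (t - 1))).erase q,
            πh (σ (Equiv.swap t (t + 1) k)) (x (σ (Equiv.swap t (t + 1) k)))) *
          β (σ t) (σ (Equiv.swap t (t + 1) q)) *
          zetaN X pt (σ (Equiv.swap t (t + 1) q)) (x (σ (Equiv.swap t (t + 1) q)))) =
        πh (σ (t + 1)) (x (σ (t + 1))) *
          ∑ q ∈ Finset.Icc 1 (t - 1),
            (∏ k ∈ (Finset.Icc 1 (t - 1)).erase q, πh (σ k) (x (σ k))) *
              β (σ t) (σ q) * zetaN X pt (σ q) (x (σ q)) := by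
      rw [Finset.mul_sum]
      refine Finset.sum_congr rfl fun q hq => ?_
      rw [Finset.mem_Icc] at hq
      have hqt : t ≠ q := by omega
      have hq' : Equiv.swap t (t + 1) q = q :=
        Equiv.swap_apply_of_ne_of_ne (by omega) (by omega)
      rw [Finset.erase_insert_of_ne hqt, Finset.prod_insert (by
        simp only [Finset.mem_erase, Finset.mem_Icc]; omega), Equiv.swap_apply_left, hq']
      have hpr : (∏ k ∈ (Finset.Icc 1 (t - 1)).erase q,
          πh (σ (Equiv.swap t (t + 1) k)) (x (σ (Equiv.swap t (t + 1) k)))) =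
          ∏ k ∈ (Finset.Icc 1 (t - 1)).erase q, πh (σ k) (x (σ k)) := by
        refine Finset.prod_congr rfl fun k hk => ?_
        rw [Finset.mem_erase, Finset.mem_Icc] at hk
        rw [Equiv.swap_apply_of_ne_of_ne (by omega) (by omega)]
      rw [hpr]
      ring
    rw [hs, hB2, hC, Equiv.swap_apply_left]
  have hD : (∑ q ∈ Finset.Icc 1 (t - 1),
      (∏ k ∈ (Finset.Icc 1 (t - 1)).erase q, πh (σ k) (x (σ k))) *
        zetaN X pt (σ q) (x (σ q)) *
        (β (σ t) (σ q) * zetaN X pt (σ t) (x (σ t)) *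
            (π (σ (t + 1)) (x (σ (t + 1))) - πh (σ (t + 1)) (x (σ (t + 1)))) -
          β (σ (t + 1)) (σ q) * zetaN X pt (σ (t + 1)) (x (σ (t + 1))) *
            (π (σ t) (x (σ t)) - πh (σ t) (x (σ t))))) =
      zetaN X pt (σ t) (x (σ t)) *
          (π (σ (t + 1)) (x (σ (t + 1))) - πh (σ (t + 1)) (x (σ (t + 1)))) *
          (∑ q ∈ Finset.Icc 1 (t - 1),
            (∏ k ∈ (Finset.Icc 1 (t - 1)).erase q, πh (σ k) (x (σ k))) *
              β (σ t) (σ q) * zetaN X pt (σ q) (x (σ q))) -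
        zetaN X pt (σ (t + 1)) (x (σ (t + 1))) *
          (π (σ t) (x (σ t)) - πh (σ t) (x (σ t))) *
          ∑ q ∈ Finset.Icc 1 (t - 1),
            (∏ k ∈ (Finset.Icc 1 (t - 1)).erase q, πh (σ k) (x (σ k))) *
              β (σ (t + 1)) (σ q) * zetaN X pt (σ q) (x (σ q)) := by
    rw [Finset.mul_sum, Finset.mul_sum, ← Finset.sum_sub_distrib]
    exact Finset.sum_congr rfl fun q _ => by ring
  rw [knwClosedF_eq, knwClosedF_eq, hP, hsplitA (σ ∘ Equiv.swap t (t + 1)), hsplitA σ,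
    htail, hsplitB (σ ∘ Equiv.swap t (t + 1)), hsplitB σ, hpre, hT1, hT2, hT3, hT4, hD, hβ]
  ring

lemma knwClosedF_congr (X : ℕ → Finset ℝ) (π πh pt : ℕ → ℝ → ℝ) (β : ℕ → ℕ → ℝ)
    (n : ℕ) (σ σ' : ℕ → ℕ) (x : ℕ → ℝ) (h : ∀ i ∈ Finset.Icc 1 n, σ i = σ' i) :
    knwClosedF X π πh pt β n σ x = knwClosedF X π πh pt β n σ' x := by
  have h' : ∀ i, 1 ≤ i → i ≤ n → σ i = σ' i := fun i h1 h2 =>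
    h i (Finset.mem_Icc.mpr ⟨h1, h2⟩)
  unfold knwClosedF
  congr 1
  · exact Finset.prod_congr rfl fun i hi => by
      rw [Finset.mem_Icc] at hi; rw [h' i hi.1 hi.2]
  · refine Finset.sum_congr rfl fun i hi => ?_
    rw [Finset.mem_Icc] at hi
    have hsum : (∑ j ∈ Finset.Icc 1 (i - 1),
        (∏ k ∈ (Finset.Icc 1 (i - 1)).erase j, πh (σ k) (x (σ k))) *
          β (σ i) (σ j) * zetaN X pt (σ j) (x (σ j))) =
        ∑ j ∈ Finset.Icc 1 (i - 1),
        (∏ k ∈ (Finset.Icc 1 (i - 1)).erase j, πh (σ' k) (x (σ' k))) *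
          β (σ' i) (σ' j) * zetaN X pt (σ' j) (x (σ' j)) := by
      refine Finset.sum_congr rfl fun j hj => ?_
      rw [Finset.mem_Icc] at hj
      have hpr : (∏ k ∈ (Finset.Icc 1 (i - 1)).erase j, πh (σ k) (x (σ k))) =
          ∏ k ∈ (Finset.Icc 1 (i - 1)).erase j, πh (σ' k) (x (σ' k)) := by
        refine Finset.prod_congr rfl fun k hk => ?_
        rw [Finset.mem_erase, Finset.mem_Icc] at hk
        rw [h' k hk.2.1 (by omega)]
      rw [hpr, h' i (by omega) (by omega), h' j hj.1 (by omega)]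
    have hpr2 : (∏ k ∈ Finset.Icc (i + 1) n, π (σ k) (x (σ k))) =
        ∏ k ∈ Finset.Icc (i + 1) n, π (σ' k) (x (σ' k)) := by
      refine Finset.prod_congr rfl fun k hk => ?_
      rw [Finset.mem_Icc] at hk
      rw [h' k (by omega) (by omega)]
    rw [hsum, hpr2, h' i (by omega) hi.2]

lemma swap_bijOn {u v : ℕ} {S : Set ℕ} (hu : u ∈ S) (hv : v ∈ S) :
    Set.BijOn (Equiv.swap u v) S S := by
  have hm : ∀ k ∈ S, Equiv.swap u v k ∈ S := by
    intro k hk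
    rw [Equiv.swap_apply_def]
    split_ifs <;> assumption
  exact ⟨fun k hk => hm k hk, (Equiv.injective _).injOn,
    fun y hy => ⟨_, hm y hy, Equiv.swap_apply_self u v y⟩⟩

lemma exists_zeta_ne (X : ℕ → Finset ℝ) (pt : ℕ → ℝ → ℝ) (i : ℕ)
    (hnn : ∀ x ∈ X i, 0 ≤ pt i x)
    (hnd : 1 < ((X i).filter fun x => pt i x ≠ 0).card) :
    ∃ y ∈ X i, zetaN X pt i y ≠ 0 := by
  obtain ⟨a, ha, b, hb, hab⟩ := Finset.one_lt_card.mp hnd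
  rw [Finset.mem_filter] at ha hb
  have key : ∃ y ∈ X i, pt i y ≠ 0 ∧ y ≠ muN X pt i := by
    rcases eq_or_ne a (muN X pt i) with h | h
    · exact ⟨b, hb.1, hb.2, by rw [← h]; exact hab.symm⟩
    · exact ⟨a, ha.1, ha.2, h⟩
  obtain ⟨y, hy, hy0, hyμ⟩ := key
  have hsig : 0 < sig2N X pt i := by
    refine Finset.sum_pos' (fun z hz => mul_nonneg (hnn z hz) (sq_nonneg _)) ⟨y, hy, ?_⟩
    have h2 : y - muN X pt i ≠ 0 := sub_ne_zero.mpr hyμ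
    have h3 : (0:ℝ) < (y - muN X pt i) ^ 2 := by
      rw [pow_two]; exact mul_self_pos.mpr h2
    exact mul_pos (lt_of_le_of_ne (hnn y hy) (Ne.symm hy0)) h3
  exact ⟨y, hy, div_ne_zero (mul_ne_zero hy0 (sub_ne_zero.mpr hyμ)) (ne_of_gt hsig)⟩

/-- number of inversions of `g` on `{1,…,n}`. -/
def invCount (n : ℕ) (g : ℕ → ℕ) : ℕ :=
  ∑ p ∈ (Finset.Icc 1 n) ×ˢ (Finset.Icc 1 n), if g p.1 < g p.2 ∧ p.2 < p.1 then 1 else 0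

lemma invCount_swap (n t : ℕ) (g : ℕ → ℕ) (ht1 : 1 ≤ t) (htn : t + 1 ≤ n)
    (hd : g (t + 1) < g t) :
    invCount n (g ∘ Equiv.swap t (t + 1)) + 1 = invCount n g := by
  classical
  have hmemIcc : t ∈ Finset.Icc 1 n ↔ t + 1 ∈ Finset.Icc 1 n := by
    simp only [Finset.mem_Icc]; omega
  have h1 : invCount n (g ∘ Equiv.swap t (t + 1)) =
      ∑ p ∈ (Finset.Icc 1 n) ×ˢ (Finset.Icc 1 n),
        if g p.1 < g p.2 ∧ Equiv.swap t (t + 1) p.2 < Equiv.swap t (t + 1) p.1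
        then 1 else 0 := by
    unfold invCount
    refine Finset.sum_equiv
      (Equiv.prodCongr (Equiv.swap t (t + 1)) (Equiv.swap t (t + 1))) ?_ ?_
    · intro p
      simp only [Finset.mem_product, Equiv.prodCongr_apply, Prod.map_fst, Prod.map_snd]
      constructor
      · rintro ⟨hp1, hp2⟩
        exact ⟨(swap_mem_iff hmemIcc p.1).mpr hp1, (swap_mem_iff hmemIcc p.2).mpr hp2⟩
      · rintro ⟨hp1, hp2⟩
        exact ⟨(swap_mem_iff hmemIcc p.1).mp hp1, (swap_mem_iff hmemIcc p.2).mp hp2⟩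
    · intro p hp
      simp only [Equiv.prodCongr_apply, Prod.map_fst, Prod.map_snd, Function.comp_apply,
        Equiv.swap_apply_self]
  have hTsub : ({((t : ℕ), t + 1), (t + 1, t)} : Finset (ℕ × ℕ)) ⊆
      (Finset.Icc 1 n) ×ˢ (Finset.Icc 1 n) := by
    intro p hp
    simp only [Finset.mem_insert, Finset.mem_singleton] at hp
    rcases hp with rfl | rfl <;> simp only [Finset.mem_product, Finset.mem_Icc] <;> omega
  have hpairne : ((t : ℕ), t + 1) ≠ (t + 1, t) := by
    intro h; rw [Prod.mk.injEq] at h; omega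
  have hsd : ∀ F : ℕ × ℕ → ℕ,
      (∑ p ∈ (Finset.Icc 1 n) ×ˢ (Finset.Icc 1 n), F p) =
      (∑ p ∈ ((Finset.Icc 1 n) ×ˢ (Finset.Icc 1 n)) \ {((t : ℕ), t + 1), (t + 1, t)}, F p) +
        (F (t, t + 1) + F (t + 1, t)) := by
    intro F
    rw [← Finset.sum_pair hpairne, Finset.sum_sdiff hTsub]
  have hcongr : (∑ p ∈ ((Finset.Icc 1 n) ×ˢ (Finset.Icc 1 n)) \ {((t : ℕ), t + 1), (t + 1, t)},
      if g p.1 < g p.2 ∧ Equiv.swap t (t + 1) p.2 < Equiv.swap t (t + 1) p.1 then 1 else 0) =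
      ∑ p ∈ ((Finset.Icc 1 n) ×ˢ (Finset.Icc 1 n)) \ {((t : ℕ), t + 1), (t + 1, t)},
        if g p.1 < g p.2 ∧ p.2 < p.1 then 1 else 0 := by
    refine Finset.sum_congr rfl fun p hp => ?_
    rw [Finset.mem_sdiff] at hp
    obtain ⟨i, j⟩ := p
    have hne1 : ¬(i = t ∧ j = t + 1) := by
      rintro ⟨rfl, rfl⟩
      exact hp.2 (by simp)
    have hne2 : ¬(i = t + 1 ∧ j = t) := by
      rintro ⟨rfl, rfl⟩
      exact hp.2 (by simp)
    have hiff : (Equiv.swap t (t + 1) j < Equiv.swap t (t + 1) i) ↔ (j < i) := by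
      rw [Equiv.swap_apply_def, Equiv.swap_apply_def]
      split_ifs <;> omega
    dsimp only
    simp only [hiff]
  rw [h1, hsd, hcongr]
  conv_rhs => rw [invCount, hsd]
  have e1 : (if g t < g (t + 1) ∧ Equiv.swap t (t + 1) (t + 1) < Equiv.swap t (t + 1) t
      then 1 else 0) = 0 := by
    rw [if_neg]; rintro ⟨h, -⟩; omega
  have e2 : (if g (t + 1) < g t ∧ Equiv.swap t (t + 1) t < Equiv.swap t (t + 1) (t + 1)
      then 1 else 0) = 0 := by
    rw [if_neg]; rintro ⟨-, h⟩
    rw [Equiv.swap_apply_left, Equiv.swap_apply_right] at h; omega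
  have e3 : (if g t < g (t + 1) ∧ t + 1 < t then 1 else 0) = 0 := by
    rw [if_neg]; rintro ⟨-, h⟩; omega
  have e4 : (if g (t + 1) < g t ∧ t < t + 1 then 1 else 0) = 1 := by
    rw [if_pos ⟨hd, by omega⟩]
  rw [e1, e2, e3, e4]

lemma invCount_zero_id (n : ℕ) (g : ℕ → ℕ) (hg : Set.BijOn g (Set.Icc 1 n) (Set.Icc 1 n))
    (h0 : invCount n g = 0) : ∀ i ∈ Finset.Icc 1 n, g i = i := by
  classical
  have hmem : ∀ i, 1 ≤ i → i ≤ n → 1 ≤ g i ∧ g i ≤ n := fun i h1 h2 =>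
    Set.mem_Icc.mp (hg.mapsTo (Set.mem_Icc.mpr ⟨h1, h2⟩))
  have hterm : ∀ i j, 1 ≤ i → i ≤ n → 1 ≤ j → j ≤ n → j < i → ¬g i < g j := by
    intro i j h1 h2 h3 h4 h5 hlt
    have hmemS : ((i, j) : ℕ × ℕ) ∈ (Finset.Icc 1 n) ×ˢ (Finset.Icc 1 n) := by
      simp only [Finset.mem_product, Finset.mem_Icc]; omega
    have := Finset.sum_eq_zero_iff.mp h0 (i, j) hmemS
    rw [if_pos ⟨hlt, h5⟩] at this
    omega
  have hstrict : ∀ i j, 1 ≤ j → j < i → i ≤ n → g j < g i := by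
    intro i j h1 h2 h3
    have hne : g j ≠ g i := fun e =>
      (by omega : j ≠ i) (hg.injOn (Set.mem_Icc.mpr ⟨h1, by omega⟩)
        (Set.mem_Icc.mpr ⟨by omega, h3⟩) e)
    have := hterm i j (by omega) h3 h1 (by omega) h2
    omega
  have hge : ∀ i, 1 ≤ i → i ≤ n → i ≤ g i := by
    intro i
    induction i with
    | zero => omega
    | succ m ih =>
      intro h1 h2
      rcases Nat.eq_or_lt_of_le h1 with h | h
      · have := hmem (m + 1) h1 h2; omega
      · have hm := ih (by omega) (by omega)
        have := hstrict (m + 1) m (by omega) (by omega) h2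
        omega
  have hsum : (∑ i ∈ Finset.Icc 1 n, g i) = ∑ i ∈ Finset.Icc 1 n, i := by
    refine Finset.sum_bij (fun a _ => g a) ?_ ?_ ?_ (fun a _ => rfl)
    · intro a ha; rw [Finset.mem_Icc] at ha ⊢; exact hmem a ha.1 ha.2
    · intro a ha b hb e
      rw [Finset.mem_Icc] at ha hb
      exact hg.injOn (Set.mem_Icc.mpr ha) (Set.mem_Icc.mpr hb) e
    · intro b hb
      rw [Finset.mem_Icc] at hb
      obtain ⟨a, ha, hab⟩ := hg.surjOn (Set.mem_Icc.mpr hb)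
      exact ⟨a, Finset.mem_Icc.mpr (Set.mem_Icc.mp ha), hab⟩
  intro i hi
  have hle : ∀ j ∈ Finset.Icc 1 n, j ≤ g j := fun j hj => by
    rw [Finset.mem_Icc] at hj; exact hge j hj.1 hj.2
  have := (Finset.sum_eq_sum_iff_of_le hle).mp hsum.symm i hi
  omega

lemma no_descent_sorted (n : ℕ) (g : ℕ → ℕ)
    (h : ∀ t, 1 ≤ t → t + 1 ≤ n → g t < g (t + 1)) : invCount n g = 0 := by
  have mono : ∀ d j, 1 ≤ j → j + d + 1 ≤ n → g j < g (j + d + 1) := by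
    intro d
    induction d with
    | zero => intro j h1 h2; simpa using h j h1 (by omega)
    | succ m ih =>
      intro j h1 h2
      have h3 := ih j h1 (by omega)
      have h4 := h (j + m + 1) (by omega) (by omega)
      have e : j + (m + 1) + 1 = j + m + 1 + 1 := by omega
      rw [e]; omega
  unfold invCount
  refine Finset.sum_eq_zero fun p hp => ?_
  rw [Finset.mem_product, Finset.mem_Icc, Finset.mem_Icc] at hp
  rw [if_neg]
  rintro ⟨hlt, hji⟩
  obtain ⟨d, hd⟩ : ∃ d, p.1 = p.2 + d + 1 := ⟨p.1 - p.2 - 1, by omega⟩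
  have := mono d p.2 (by omega) (by omega)
  rw [← hd] at this
  omega

lemma exists_perm3 (n i j k : ℕ) (hn : 3 ≤ n)
    (hi1 : 1 ≤ i) (hi2 : i ≤ n) (hj1 : 1 ≤ j) (hj2 : j ≤ n) (hk1 : 1 ≤ k) (hk2 : k ≤ n)
    (hij : i ≠ j) (hik : i ≠ k) (hjk : j ≠ k) :
    ∃ p : Equiv.Perm ℕ, Set.BijOn p (Set.Icc 1 n) (Set.Icc 1 n) ∧
      p 1 = i ∧ p 2 = j ∧ p 3 = k := by
  classical
  have m1 : (1 : ℕ) ∈ Set.Icc 1 n := Set.mem_Icc.mpr ⟨by omega, by omega⟩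
  have m2 : (2 : ℕ) ∈ Set.Icc 1 n := Set.mem_Icc.mpr ⟨by omega, by omega⟩
  have m3 : (3 : ℕ) ∈ Set.Icc 1 n := Set.mem_Icc.mpr ⟨by omega, by omega⟩
  have mi : i ∈ Set.Icc 1 n := Set.mem_Icc.mpr ⟨hi1, hi2⟩
  have mj : j ∈ Set.Icc 1 n := Set.mem_Icc.mpr ⟨hj1, hj2⟩
  have mk : k ∈ Set.Icc 1 n := Set.mem_Icc.mpr ⟨hk1, hk2⟩
  set a := Equiv.swap 1 i with ha
  set j' := a j with hj'
  set b := Equiv.swap 2 j' with hb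
  set k' := b (a k) with hk'
  set c := Equiv.swap 3 k' with hc
  have mj' : j' ∈ Set.Icc 1 n := (swap_bijOn m1 mi).mapsTo mj
  have mk' : k' ∈ Set.Icc 1 n := (swap_bijOn m2 mj').mapsTo ((swap_bijOn m1 mi).mapsTo mk)
  have hj'1 : j' ≠ 1 := by
    rw [hj']
    intro h
    have h2 : a j = a i := by rw [h, Equiv.swap_apply_right]
    exact hij (Equiv.injective a h2).symm
  have hk'1 : k' ≠ 1 := by
    rw [hk']
    intro h
    have hb1 : b 1 = 1 := Equiv.swap_apply_of_ne_of_ne (by omega) (Ne.symm hj'1)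
    have h2 : a k = 1 := Equiv.injective b (h.trans hb1.symm)
    have h3 : a k = a i := by rw [h2, Equiv.swap_apply_right]
    exact hik (Equiv.injective a h3).symm
  have hk'2 : k' ≠ 2 := by
    rw [hk']
    intro h
    have h2 : a k = b 2 := by
      have h3 := congrArg b h
      rwa [Equiv.swap_apply_self] at h3
    rw [Equiv.swap_apply_left] at h2
    rw [hj'] at h2
    exact hjk (Equiv.injective a h2).symm
  refine ⟨a * (b * c), ?_, ?_, ?_, ?_⟩
  · exact (swap_bijOn m1 mi).comp ((swap_bijOn m2 mj').comp (swap_bijOn m3 mk'))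
  · simp only [Equiv.Perm.mul_apply]
    rw [show c 1 = 1 from Equiv.swap_apply_of_ne_of_ne (by omega) (Ne.symm hk'1)]
    rw [show b 1 = 1 from Equiv.swap_apply_of_ne_of_ne (by omega) (Ne.symm hj'1)]
    exact Equiv.swap_apply_left 1 i
  · simp only [Equiv.Perm.mul_apply]
    rw [show c 2 = 2 from Equiv.swap_apply_of_ne_of_ne (by omega) (Ne.symm hk'2)]
    rw [show b 2 = j' from Equiv.swap_apply_left 2 j', hj']
    exact Equiv.swap_apply_self 1 i j
  · simp only [Equiv.Perm.mul_apply]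
    rw [show c 3 = k' from Equiv.swap_apply_left 3 k', hk']
    rw [Equiv.swap_apply_self]
    exact Equiv.swap_apply_self 1 i k

theorem stmt13 (n : ℕ) (hn : 3 ≤ n)
    (X : ℕ → Finset ℝ) (π πh pt : ℕ → ℝ → ℝ) (β : ℕ → ℕ → ℝ)
    (hXne : ∀ i ∈ Finset.Icc 1 n, (X i).Nonempty)
    (hπ_pos : ∀ i ∈ Finset.Icc 1 n, ∀ x ∈ X i, 0 < π i x)
    (hπ_sum : ∀ i ∈ Finset.Icc 1 n, ∑ x ∈ X i, π i x = 1)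
    (hpt_nn : ∀ i ∈ Finset.Icc 1 n, ∀ x ∈ X i, 0 ≤ pt i x)
    (hpt_sum : ∀ i ∈ Finset.Icc 1 n, ∑ x ∈ X i, pt i x = 1)
    (hpt_nd : ∀ i ∈ Finset.Icc 1 n, 1 < ((X i).filter fun x => pt i x ≠ 0).card)
    (hph_nn : ∀ i ∈ Finset.Icc 1 n, ∀ x ∈ X i, 0 ≤ πh i x)
    (hph_sum : ∀ i ∈ Finset.Icc 1 n, ∑ x ∈ X i, πh i x = 1)
    (hβ_symm : ∀ i ∈ Finset.Icc 1 n, ∀ j ∈ Finset.Icc 1 n, β i j = β j i)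
    :
    -- the permutation property of the family `(Π_g)_g` …
    (∀ g : ℕ → ℕ, Set.BijOn g (Set.Icc 1 n) (Set.Icc 1 n) →
      ∀ x : ℕ → ℝ, (∀ i ∈ Finset.Icc 1 n, x i ∈ X i) →
        knwClosedF X π πh pt β n g x = knwClosedF X π πh pt β n id x) ↔
      -- … holds iff the triple conditions hold
      (∀ i ∈ Finset.Icc 1 n, ∀ j ∈ Finset.Icc 1 n, ∀ k ∈ Finset.Icc 1 n,
        i ≠ j → i ≠ k → j ≠ k →
        ∀ xi ∈ X i, ∀ xj ∈ X j, ∀ xk ∈ X k,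
          β i j * zetaN X pt i xi * zetaN X pt j xj * (π k xk - πh k xk) =
            β i k * zetaN X pt i xi * zetaN X pt k xk * (π j xj - πh j xj) ∧
          β i k * zetaN X pt i xi * zetaN X pt k xk * (π j xj - πh j xj) =
            β j k * zetaN X pt j xj * zetaN X pt k xk * (π i xi - πh i xi)) := by
  classical
  constructor
  · -- invariance ⇒ triple conditions
    intro hperm i hi j hj k hk hij hik hjk xi hxi xj hxj xk hxk
    have hi' := Finset.mem_Icc.mp hi
    have hj' := Finset.mem_Icc.mp hj
    have hk' := Finset.mem_Icc.mp hk
    have E : ∀ a b c : ℕ, 1 ≤ a → a ≤ n → 1 ≤ b → b ≤ n → 1 ≤ c → c ≤ n →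
        a ≠ b → a ≠ c → b ≠ c → ∀ xb ∈ X b, ∀ xc ∈ X c,
        β b a * zetaN X pt b xb * (π c xc - πh c xc) =
          β c a * zetaN X pt c xc * (π b xb - πh b xb) := by
      intro a b c ha1 ha2 hb1 hb2 hc1 hc2 hab hac hbc xb hxb xc hxc
      have ma : a ∈ Finset.Icc 1 n := Finset.mem_Icc.mpr ⟨ha1, ha2⟩
      have mb : b ∈ Finset.Icc 1 n := Finset.mem_Icc.mpr ⟨hb1, hb2⟩
      have mc : c ∈ Finset.Icc 1 n := Finset.mem_Icc.mpr ⟨hc1, hc2⟩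
      obtain ⟨ya, hya, hza⟩ := exists_zeta_ne X pt a (hpt_nn a ma) (hpt_nd a ma)
      obtain ⟨p, hp, hp1, hp2, hp3⟩ :=
        exists_perm3 n a b c hn ha1 ha2 hb1 hb2 hc1 hc2 hab hac hbc
      set x0 : ℕ → ℝ := fun m =>
        if m = a then ya else if m = b then xb else if m = c then xc
        else if h : (X m).Nonempty then h.choose else 0 with hx0def
      have hx0 : ∀ m ∈ Finset.Icc 1 n, x0 m ∈ X m := by
        intro m hm
        simp only [hx0def]
        split_ifs with e1 e2 e3 e4
        · subst e1; exact hya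
        · subst e2; exact hxb
        · subst e3; exact hxc
        · exact e4.choose_spec
        · exact absurd (hXne m hm) e4
      have hx0a : x0 a = ya := by simp [hx0def]
      have hx0b : x0 b = xb := by simp [hx0def, Ne.symm hab]
      have hx0c : x0 c = xc := by simp [hx0def, Ne.symm hac, Ne.symm hbc]
      have hswap := knw_swap X π πh pt β n 2 (by omega) (by omega) (⇑p) x0
        (hβ_symm (p 2) (by rw [hp2]; exact mb) (p (2 + 1))
          (by rw [show (2:ℕ)+1 = 3 from rfl, hp3]; exact mc))
      simp only [show (2:ℕ) + 1 = 3 from rfl, show (2:ℕ) - 1 = 1 from rfl,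
        show (2:ℕ) + 2 = 4 from rfl, Finset.Icc_self, Finset.sum_singleton,
        Finset.erase_singleton, Finset.prod_empty, hp1, hp2, hp3, hx0a, hx0b, hx0c]
        at hswap
      have hF := hperm (⇑p) hp x0 hx0
      have hFs := hperm (⇑p ∘ ⇑(Equiv.swap 2 3))
        (hp.comp (swap_bijOn (Set.mem_Icc.mpr ⟨by omega, by omega⟩)
          (Set.mem_Icc.mpr ⟨by omega, by omega⟩))) x0 hx0
      have hC : 0 < ∏ m ∈ Finset.Icc 4 n, π (p m) (x0 (p m)) := by
        refine Finset.prod_pos fun m hm => ?_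
        rw [Finset.mem_Icc] at hm
        have hmem : p m ∈ Set.Icc 1 n := hp.mapsTo (Set.mem_Icc.mpr ⟨by omega, hm.2⟩)
        rw [Set.mem_Icc] at hmem
        exact hπ_pos (p m) (Finset.mem_Icc.mpr hmem) (x0 (p m))
          (hx0 (p m) (Finset.mem_Icc.mpr hmem))
      have hT : (1 * zetaN X pt a ya *
          (β b a * zetaN X pt b xb * (π c xc - πh c xc) -
            β c a * zetaN X pt c xc * (π b xb - πh b xb))) *
          ∏ m ∈ Finset.Icc 4 n, π (p m) (x0 (p m)) = 0 := by
        rw [hF] at hswap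
        rw [hFs] at hswap
        linarith
      have hT2 : zetaN X pt a ya *
          (β b a * zetaN X pt b xb * (π c xc - πh c xc) -
            β c a * zetaN X pt c xc * (π b xb - πh b xb)) = 0 := by
        have := (mul_eq_zero.mp hT).resolve_right (ne_of_gt hC)
        rwa [one_mul] at this
      have hT3 := (mul_eq_zero.mp hT2).resolve_left hza
      linarith
    constructor
    · have h := E i j k hi'.1 hi'.2 hj'.1 hj'.2 hk'.1 hk'.2 hij hik hjk xj hxj xk hxk
      rw [hβ_symm i hi j hj, hβ_symm i hi k hk]
      linear_combination zetaN X pt i xi * h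
    · have h := E k i j hk'.1 hk'.2 hi'.1 hi'.2 hj'.1 hj'.2
        (Ne.symm hik) (Ne.symm hjk) hij xi hxi xj hxj
      linear_combination zetaN X pt k xk * h
  · -- triple conditions ⇒ invariance
    intro hyp g hg x hx
    have base : ∀ g : ℕ → ℕ, Set.BijOn g (Set.Icc 1 n) (Set.Icc 1 n) → invCount n g = 0 →
        ∀ x : ℕ → ℝ, knwClosedF X π πh pt β n g x = knwClosedF X π πh pt β n id x :=
      fun g hg h0 x => knwClosedF_congr X π πh pt β n g id x
        (fun i hi => invCount_zero_id n g hg h0 i hi)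
    have key : ∀ N : ℕ, ∀ g : ℕ → ℕ, Set.BijOn g (Set.Icc 1 n) (Set.Icc 1 n) →
        invCount n g ≤ N → ∀ x : ℕ → ℝ, (∀ i ∈ Finset.Icc 1 n, x i ∈ X i) →
        knwClosedF X π πh pt β n g x = knwClosedF X π πh pt β n id x := by
      intro N
      induction N with
      | zero => intro g hg hN x hx; exact base g hg (by omega) x
      | succ N ih =>
        intro g hg hN x hx
        by_cases h0 : invCount n g = 0
        · exact base g hg h0 x
        · have hdesc : ∃ t, 1 ≤ t ∧ t + 1 ≤ n ∧ g (t + 1) < g t := by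
            by_contra hno
            push_neg at hno
            apply h0
            apply no_descent_sorted
            intro t h1 h2
            have hle := hno t h1 h2
            have hne : g t ≠ g (t + 1) := fun e => (by omega : t ≠ t + 1)
              (hg.injOn (Set.mem_Icc.mpr ⟨h1, by omega⟩)
                (Set.mem_Icc.mpr ⟨by omega, h2⟩) e)
            omega
          obtain ⟨t, ht1, htn, hd⟩ := hdesc
          have hmemt : g t ∈ Finset.Icc 1 n := Finset.mem_Icc.mpr
            (Set.mem_Icc.mp (hg.mapsTo (Set.mem_Icc.mpr ⟨ht1, by omega⟩)))
          have hmemt1 : g (t + 1) ∈ Finset.Icc 1 n := Finset.mem_Icc.mpr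
            (Set.mem_Icc.mp (hg.mapsTo (Set.mem_Icc.mpr ⟨by omega, htn⟩)))
          have hswapinv := invCount_swap n t g ht1 htn hd
          have hbij' : Set.BijOn (g ∘ Equiv.swap t (t + 1)) (Set.Icc 1 n) (Set.Icc 1 n) :=
            hg.comp (swap_bijOn (Set.mem_Icc.mpr ⟨ht1, by omega⟩)
              (Set.mem_Icc.mpr ⟨by omega, htn⟩))
          have hih := ih (g ∘ Equiv.swap t (t + 1)) hbij' (by omega) x hx
          have hks := knw_swap X π πh pt β n t ht1 htn g x
            (hβ_symm (g t) hmemt (g (t + 1)) hmemt1)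
          have hD : (∑ q ∈ Finset.Icc 1 (t - 1),
              (∏ k ∈ (Finset.Icc 1 (t - 1)).erase q, πh (g k) (x (g k))) *
                zetaN X pt (g q) (x (g q)) *
                (β (g t) (g q) * zetaN X pt (g t) (x (g t)) *
                    (π (g (t + 1)) (x (g (t + 1))) - πh (g (t + 1)) (x (g (t + 1)))) -
                  β (g (t + 1)) (g q) * zetaN X pt (g (t + 1)) (x (g (t + 1))) *
                    (π (g t) (x (g t)) - πh (g t) (x (g t))))) = 0 := by
            refine Finset.sum_eq_zero fun q hq => ?_
            rw [Finset.mem_Icc] at hq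
            have hmemq : g q ∈ Finset.Icc 1 n := Finset.mem_Icc.mpr
              (Set.mem_Icc.mp (hg.mapsTo (Set.mem_Icc.mpr ⟨hq.1, by omega⟩)))
            have hne1 : g q ≠ g t := fun e => (by omega : q ≠ t)
              (hg.injOn (Set.mem_Icc.mpr ⟨hq.1, by omega⟩)
                (Set.mem_Icc.mpr ⟨ht1, by omega⟩) e)
            have hne2 : g q ≠ g (t + 1) := fun e => (by omega : q ≠ t + 1)
              (hg.injOn (Set.mem_Icc.mpr ⟨hq.1, by omega⟩)
                (Set.mem_Icc.mpr ⟨by omega, htn⟩) e)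
            have hne3 : g t ≠ g (t + 1) := fun e => (by omega : t ≠ t + 1)
              (hg.injOn (Set.mem_Icc.mpr ⟨ht1, by omega⟩)
                (Set.mem_Icc.mpr ⟨by omega, htn⟩) e)
            have h1 := (hyp (g q) hmemq (g t) hmemt (g (t + 1)) hmemt1 hne1 hne2 hne3
              (x (g q)) (hx _ hmemq) (x (g t)) (hx _ hmemt)
              (x (g (t + 1))) (hx _ hmemt1)).1
            rw [hβ_symm (g t) hmemt (g q) hmemq, hβ_symm (g (t + 1)) hmemt1 (g q) hmemq]
            linear_combination (∏ k ∈ (Finset.Icc 1 (t - 1)).erase q, πh (g k) (x (g k))) * h1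
          rw [hD, zero_mul, sub_zero] at hks
          rw [← hks]
          exact hih
    exact key (invCount n g) g hg le_rfl x hx
end

section
/- Let n ≥ 3 and suppose π̂_i = π_i for every i ∈ {1,…,n}. Then the family (Π_g)_g has the permutation property: Π_g(x_1,…,x_n) = Π_e(x_1,…,x_n) for every permutation g of {1,…,n} and all x ∈ X_1×⋯×X_n. -/
open Finset

/-!
With `π̂ = π` and all `π_c(x_c) ≠ 0`, the `(i, j)` summand of `Π_g` is
`ζ_a β_{ab} ζ_b · (∏_c π_c(x_c)) / (π_a π_b)` with `a = g(i)`, `b = g(j)`: the products over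
`k < i, k ≠ j` and over `k > i` together miss exactly the factors at `i` and `j`. So `Π_g` is
`∏_c π_c(x_c)` plus a sum over the pairs `j < i` of a weight that is symmetric in `(a, b)` because
`β` is. Such a sum is half the off-diagonal sum, which does not change when the pairs are
relabelled by a bijection `g`.
-/

@[to_additive]
theorem prod_comp_of_bijOn {ι : Type*} {M : Type*} [CommMonoid M] {s : Finset ι} {f : ι → ι}
    (hf : Set.BijOn f s s) (F : ι → M) : ∏ i ∈ s, F (f i) = ∏ i ∈ s, F i :=
  prod_nbij f (fun _ hi => hf.mapsTo hi) hf.injOn hf.surjOn fun _ _ => rfl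

section

variable {ι M : Type*} [LinearOrder ι]

theorem sum_sum_eq_sum_diag_add_two_nsmul_sum_lt [AddCommMonoid M] (s : Finset ι)
    {W : ι → ι → M} (hW : ∀ a ∈ s, ∀ b ∈ s, W a b = W b a) :
    ∑ i ∈ s, ∑ j ∈ s, W i j = ∑ i ∈ s, W i i + 2 • ∑ i ∈ s, ∑ j ∈ s with j < i, W i j := by
  have hsplit : ∀ i j, W i j = (if j < i then W i j else 0) + (if i = j then W i j else 0)
      + (if i < j then W i j else 0) := fun i j => by
    rcases lt_trichotomy i j with h | rfl | h
    · simp [h, h.ne, h.not_gt]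
    · simp
    · simp [h, h.ne', h.not_gt]
  have hupper : ∑ i ∈ s, ∑ j ∈ s, (if i < j then W i j else 0)
      = ∑ i ∈ s, ∑ j ∈ s, (if j < i then W i j else 0) := by
    rw [sum_comm]
    refine sum_congr rfl fun i hi => sum_congr rfl fun j hj => ?_
    rw [hW j hj i hi]
  simp_rw [sum_filter]
  conv_lhs => enter [2, i, 2, j]; rw [hsplit i j]
  simp only [sum_add_distrib, hupper, sum_ite_eq, two_nsmul]
  rw [sum_congr rfl fun i hi => if_pos hi]
  abel

theorem sum_sum_lt_comp_of_bijOn [AddCancelCommMonoid M] [IsAddTorsionFree M]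
    {s : Finset ι} {f : ι → ι} (hf : Set.BijOn f s s) {W : ι → ι → M}
    (hW : ∀ a ∈ s, ∀ b ∈ s, W a b = W b a) :
    ∑ i ∈ s, ∑ j ∈ s with j < i, W (f i) (f j) = ∑ i ∈ s, ∑ j ∈ s with j < i, W i j := by
  have hfull : ∑ i ∈ s, ∑ j ∈ s, W (f i) (f j) = ∑ i ∈ s, ∑ j ∈ s, W i j := by
    rw [sum_congr rfl fun i _ => sum_comp_of_bijOn hf (W (f i))]
    exact sum_comp_of_bijOn hf (fun i => ∑ j ∈ s, W i j)
  rw [sum_sum_eq_sum_diag_add_two_nsmul_sum_lt s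
      (fun a ha b hb => hW _ (hf.mapsTo ha) _ (hf.mapsTo hb)),
    sum_sum_eq_sum_diag_add_two_nsmul_sum_lt s hW, sum_comp_of_bijOn hf (fun i => W i i)] at hfull
  exact IsAddTorsionFree.nsmul_right_injective two_ne_zero (add_left_cancel hfull)

end

theorem prod_Icc_eq_mul_mul_prod_erase_mul_prod_Icc {M : Type*} [CommMonoid M] (p : ℕ → M)
    {n i j : ℕ} (hj : j ∈ Icc 1 (i - 1)) (hi : i ≤ n) :
    ∏ k ∈ Icc 1 n, p k
      = p i * p j * ((∏ k ∈ (Icc 1 (i - 1)).erase j, p k) * ∏ k ∈ Icc (i + 1) n, p k) := by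
  have hj' := mem_Icc.1 hj
  have hsplit : Icc 1 n = Icc 1 (i - 1) ∪ insert i (Icc (i + 1) n) := by
    ext k; simp only [mem_Icc, mem_union, mem_insert]; omega
  have hdisj : Disjoint (Icc 1 (i - 1)) (insert i (Icc (i + 1) n)) := by
    rw [disjoint_left]; intro k; simp only [mem_Icc, mem_insert]; omega
  rw [hsplit, prod_union hdisj, prod_insert (by simp), ← mul_prod_erase _ _ hj]
  ac_rfl

noncomputable def knwPairWeight (X : ℕ → Finset ℝ) (π pt : ℕ → ℝ → ℝ) (β : ℕ → ℕ → ℝ)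
    (n : ℕ) (x : ℕ → ℝ) (a b : ℕ) : ℝ :=
  zetaN X pt a (x a) * β a b * zetaN X pt b (x b) *
    ((∏ c ∈ Icc 1 n, π c (x c)) / (π a (x a) * π b (x b)))

theorem knwClosedF_eq_prod_add_sum_pairWeight {X : ℕ → Finset ℝ} {π πh pt : ℕ → ℝ → ℝ}
    {β : ℕ → ℕ → ℝ} {n : ℕ} {f : ℕ → ℕ} {x : ℕ → ℝ} (hf : Set.BijOn f (Icc 1 n) (Icc 1 n))
    (hπ : ∀ c ∈ Icc 1 n, π c (x c) ≠ 0) (hπh : ∀ c ∈ Icc 1 n, πh c (x c) = π c (x c)) :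
    knwClosedF X π πh pt β n f x = ∏ c ∈ Icc 1 n, π c (x c)
      + ∑ i ∈ Icc 1 n, ∑ j ∈ Icc 1 n with j < i, knwPairWeight X π pt β n x (f i) (f j) := by
  have hfIcc : ∀ {k}, k ∈ Icc 1 n → f k ∈ Icc 1 n := fun hk => hf.mapsTo hk
  unfold knwClosedF
  rw [prod_comp_of_bijOn hf fun c => π c (x c)]
  congr 1
  rw [← sum_subset (Icc_subset_Icc_left one_le_two) fun i hi hi2 => by
    rw [filter_eq_empty_iff.2 fun k hk => by simp only [mem_Icc] at hi hi2 hk; omega, sum_empty]]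
  refine sum_congr rfl fun i hi => ?_
  have hi' := mem_Icc.1 hi
  rw [show (Icc 1 n).filter (· < i) = Icc 1 (i - 1) by
      ext k; simp only [mem_filter, mem_Icc]; omega,
    mul_sum, sum_mul]
  refine sum_congr rfl fun j hj => ?_
  have hj' := mem_Icc.1 hj
  have hfi : π (f i) (x (f i)) ≠ 0 := hπ _ (hfIcc (mem_Icc.2 ⟨by omega, hi'.2⟩))
  have hfj : π (f j) (x (f j)) ≠ 0 := hπ _ (hfIcc (mem_Icc.2 ⟨hj'.1, by omega⟩))
  have hhat : ∀ k ∈ (Icc 1 (i - 1)).erase j, πh (f k) (x (f k)) = π (f k) (x (f k)) :=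
    fun k hk => hπh _ (hfIcc (by simp only [mem_erase, mem_Icc] at hk ⊢; omega))
  rw [prod_congr rfl hhat, knwPairWeight, ← prod_comp_of_bijOn hf fun c => π c (x c),
    prod_Icc_eq_mul_mul_prod_erase_mul_prod_Icc (fun k => π (f k) (x (f k))) hj hi'.2,
    mul_div_cancel_left₀ _ (mul_ne_zero hfi hfj)]
  ring

theorem knwPairWeight_comm {X : ℕ → Finset ℝ} {π pt : ℕ → ℝ → ℝ} {β : ℕ → ℕ → ℝ} {n : ℕ}
    {x : ℕ → ℝ} {a b : ℕ} (hβ : β a b = β b a) :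
    knwPairWeight X π pt β n x a b = knwPairWeight X π pt β n x b a := by
  rw [knwPairWeight, knwPairWeight, hβ]
  ring

theorem stmt14_general (n : ℕ)
    (X : ℕ → Finset ℝ) (π πh pt : ℕ → ℝ → ℝ) (β : ℕ → ℕ → ℝ)
    (hπ_pos : ∀ i ∈ Finset.Icc 1 n, ∀ x ∈ X i, 0 < π i x)
    (hβ_symm : ∀ i ∈ Finset.Icc 1 n, ∀ j ∈ Finset.Icc 1 n, β i j = β j i)
    -- assume `π̂_i = π_i` for every `i`
    (hph_eq : ∀ i ∈ Finset.Icc 1 n, ∀ x ∈ X i, πh i x = π i x) :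
    -- then the family `(Π_g)_g` has the permutation property
    ∀ g : ℕ → ℕ, Set.BijOn g (Set.Icc 1 n) (Set.Icc 1 n) →
      ∀ x : ℕ → ℝ, (∀ i ∈ Finset.Icc 1 n, x i ∈ X i) →
        knwClosedF X π πh pt β n g x = knwClosedF X π πh pt β n id x := by
  intro g hg x hx
  rw [← coe_Icc] at hg
  have hπ : ∀ c ∈ Icc 1 n, π c (x c) ≠ 0 := fun c hc => (hπ_pos c hc _ (hx c hc)).ne'
  have hπh : ∀ c ∈ Icc 1 n, πh c (x c) = π c (x c) := fun c hc => hph_eq c hc _ (hx c hc)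
  rw [knwClosedF_eq_prod_add_sum_pairWeight hg hπ hπh,
    knwClosedF_eq_prod_add_sum_pairWeight (Set.bijOn_id _) hπ hπh,
    sum_sum_lt_comp_of_bijOn hg fun a ha b hb => knwPairWeight_comm (hβ_symm a ha b hb)]
  rfl

theorem stmt14 (n : ℕ) (hn : 3 ≤ n)
    (X : ℕ → Finset ℝ) (π πh pt : ℕ → ℝ → ℝ) (β : ℕ → ℕ → ℝ)
    (hXne : ∀ i ∈ Finset.Icc 1 n, (X i).Nonempty)
    (hπ_pos : ∀ i ∈ Finset.Icc 1 n, ∀ x ∈ X i, 0 < π i x)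
    (hπ_sum : ∀ i ∈ Finset.Icc 1 n, ∑ x ∈ X i, π i x = 1)
    (hpt_nn : ∀ i ∈ Finset.Icc 1 n, ∀ x ∈ X i, 0 ≤ pt i x)
    (hpt_sum : ∀ i ∈ Finset.Icc 1 n, ∑ x ∈ X i, pt i x = 1)
    (hpt_nd : ∀ i ∈ Finset.Icc 1 n, 1 < ((X i).filter fun x => pt i x ≠ 0).card)
    (hph_nn : ∀ i ∈ Finset.Icc 1 n, ∀ x ∈ X i, 0 ≤ πh i x)
    (hph_sum : ∀ i ∈ Finset.Icc 1 n, ∑ x ∈ X i, πh i x = 1)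
    (hβ_symm : ∀ i ∈ Finset.Icc 1 n, ∀ j ∈ Finset.Icc 1 n, β i j = β j i)
    -- assume `π̂_i = π_i` for every `i`
    (hph_eq : ∀ i ∈ Finset.Icc 1 n, ∀ x ∈ X i, πh i x = π i x) :
    -- then the family `(Π_g)_g` has the permutation property
    ∀ g : ℕ → ℕ, Set.BijOn g (Set.Icc 1 n) (Set.Icc 1 n) →
      ∀ x : ℕ → ℝ, (∀ i ∈ Finset.Icc 1 n, x i ∈ X i) →
        knwClosedF X π πh pt β n g x = knwClosedF X π πh pt β n id x :=
  stmt14_general n X π πh pt β hπ_pos hβ_symm hph_eq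
end
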